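/- Let Σ=(Γ=(V,E),σ) be a signed graph with an orientation ω compatible with σ and let G be a finite additive abelian group. Then the number of G-tensions of Σ equals |G|^{|V|−k_b(Σ)}, and the number of G-potential differences of Σ equals |G|^{|V|−k(Σ)} · |2G|^{k_u(Σ)}. -/

import Mathlib

attribute [local instance] Classical.propDecidable

noncomputable section SignedGraphs

/-- A signed graph: a multigraph with ordered pairs of endpoints (the order is
an artefact of the encoding) together with a sign `±1` on each edge. -/
structure SGraph (V : Type*) (E : Type*) where
  ends : E → V × V
  sign : E → ℤˣ

namespace SGraph

variable {V E : Type*}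

/-- Endpoint of `e` on side `b`; a loop has both endpoints equal, but its two
half-edges are distinguished by the side `b`. -/
def endpt (Γ : SGraph V E) (e : E) (b : Bool) : V :=
  cond b (Γ.ends e).1 (Γ.ends e).2

/-- `e` is a loop of the underlying graph. -/
def IsLoop (Γ : SGraph V E) (e : E) : Prop := (Γ.ends e).1 = (Γ.ends e).2

/-- Walks in a signed multigraph: a step traverses an edge `e` in direction `d`
(from the side-`d` endpoint to the other endpoint). -/
inductive Walk (Γ : SGraph V E) : V → V → Type _
  | nil (v : V) : Walk Γ v v
  | cons (e : E) (d : Bool) {w : V} (p : Walk Γ (Γ.endpt e (!d)) w) : Walk Γ (Γ.endpt e d) w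

namespace Walk

variable {Γ : SGraph V E}

/-- The list of vertices visited by a walk (including the final one). -/
def verts : ∀ {u v : V}, Γ.Walk u v → List V
  | _, _, .nil x => [x]
  | _, _, .cons e d p => Γ.endpt e d :: p.verts

/-- The list of edges traversed by a walk. -/
def edges : ∀ {u v : V}, Γ.Walk u v → List E
  | _, _, .nil _ => []
  | _, _, .cons e _ p => e :: p.edges

/-- The list of (edge, direction) steps of a walk. -/
def steps : ∀ {u v : V}, Γ.Walk u v → List (E × Bool)
  | _, _, .nil _ => []
  | _, _, .cons e d p => (e, d) :: p.steps

/-- The sources of the steps of a walk, i.e. all visited vertices except the last. -/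
def srcs {u v : V} (W : Γ.Walk u v) : List V := W.verts.dropLast

/-- The sign of a walk: the product of the signs of its edges. -/
def sgn : ∀ {u v : V}, Γ.Walk u v → ℤˣ
  | _, _, .nil _ => 1
  | _, _, .cons e _ p => Γ.sign e * p.sgn

/-- Concatenation of walks. -/
def append : ∀ {u v w : V}, Γ.Walk u v → Γ.Walk v w → Γ.Walk u w
  | _, _, _, .nil _, q => q
  | _, _, _, .cons e d p, q => .cons e d (p.append q)

/-- The sum `Σᵢ f(eᵢ)` of the values of `f` on the edges of the walk,
with multiplicity. -/
def edgeSum {G : Type*} [AddCommGroup G] (f : E → G) {u v : V} (W : Γ.Walk u v) : G :=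
  (W.edges.map f).sum

/-- The sum `Σᵢ ω(vᵢ,eᵢ)·(Π_{j<i} σ(eⱼ))·f(eᵢ)` along a walk, where `ω(vᵢ,eᵢ)`
is the value of `ω` on the half-edge by which the walk leaves `vᵢ`. -/
def tensionSum {G : Type*} [AddCommGroup G] (ω : E → Bool → ℤˣ) (f : E → G) :
    ∀ {u v : V}, Γ.Walk u v → G
  | _, _, .nil _ => 0
  | _, _, .cons e d p => ((ω e d : ℤ) • f e) + ((Γ.sign e : ℤ) • tensionSum ω f p)

/-- `Q` is the reverse of the walk `P`. -/
def IsReverseOf {u v : V} (Q : Γ.Walk v u) (P : Γ.Walk u v) : Prop :=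
  Q.steps = P.steps.reverse.map fun s => (s.1, !s.2)

end Walk

/-- A closed walk is a cycle if it is nontrivial, visits no vertex twice and
uses no edge twice. -/
def IsCycle (Γ : SGraph V E) {v : V} (W : Γ.Walk v v) : Prop :=
  W.edges ≠ [] ∧ W.srcs.Nodup ∧ W.edges.Nodup

/-- A balanced (positive) cycle. -/
def IsBalancedCycle (Γ : SGraph V E) {v : V} (W : Γ.Walk v v) : Prop :=
  Γ.IsCycle W ∧ W.sgn = 1

/-- An unbalanced (negative) cycle. -/
def IsUnbalancedCycle (Γ : SGraph V E) {v : V} (W : Γ.Walk v v) : Prop :=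
  Γ.IsCycle W ∧ W.sgn = -1

/-- A nontrivial walk that is a simple path (all visited vertices distinct). -/
def IsPathWalk (Γ : SGraph V E) {u v : V} (P : Γ.Walk u v) : Prop :=
  P.edges ≠ [] ∧ P.verts.Nodup

/-- A tight handcuff at `v`: two edge-disjoint unbalanced cycles sharing exactly
the vertex `v`. -/
def IsTightHandcuff (Γ : SGraph V E) {v : V} (C₁ C₂ : Γ.Walk v v) : Prop :=
  Γ.IsUnbalancedCycle C₁ ∧ Γ.IsUnbalancedCycle C₂ ∧
    (∀ x ∈ C₁.srcs, x ∈ C₂.srcs → x = v) ∧ ∀ e ∈ C₁.edges, e ∉ C₂.edges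

/-- A loose handcuff: two vertex-disjoint unbalanced cycles `C₁` (at `u`) and
`C₂` (at `w`) joined by a simple path `P` from `u` to `w` meeting the cycles
exactly in its endpoints. -/
def IsLooseHandcuff (Γ : SGraph V E) {u w : V} (C₁ : Γ.Walk u u) (P : Γ.Walk u w)
    (C₂ : Γ.Walk w w) : Prop :=
  Γ.IsUnbalancedCycle C₁ ∧ Γ.IsUnbalancedCycle C₂ ∧ Γ.IsPathWalk P ∧
    (∀ x ∈ C₁.srcs, x ∉ C₂.srcs) ∧
    (∀ x ∈ P.verts, x ∈ C₁.srcs → x = u) ∧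
    (∀ x ∈ P.verts, x ∈ C₂.srcs → x = w) ∧
    ∀ e ∈ P.edges, e ∉ C₁.edges ∧ e ∉ C₂.edges

/-- The canonical closed walks traversing a circuit of the signed graph:
a balanced cycle, a tight handcuff `C₁ * C₂`, or a loose handcuff
`C₁ * P * C₂ * P⁻¹` (the circuit path edges being used twice). -/
def IsBasicCircuitWalk (Γ : SGraph V E) {v : V} (W : Γ.Walk v v) : Prop :=
  Γ.IsBalancedCycle W ∨
    (∃ C₁ C₂ : Γ.Walk v v, Γ.IsTightHandcuff C₁ C₂ ∧ W = C₁.append C₂) ∨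
    ∃ (w : V) (C₁ : Γ.Walk v v) (P : Γ.Walk v w) (C₂ : Γ.Walk w w) (Q : Γ.Walk w v),
      Γ.IsLooseHandcuff C₁ P C₂ ∧ Q.IsReverseOf P ∧
        W = C₁.append (P.append (C₂.append Q))

/-- A circuit walk: a rotation of a basic circuit walk. -/
def IsCircuitWalk (Γ : SGraph V E) {v : V} (W : Γ.Walk v v) : Prop :=
  ∃ (u : V) (A : Γ.Walk u v) (B : Γ.Walk v u),
    W = B.append A ∧ Γ.IsBasicCircuitWalk (A.append B)

/-- `e` is a circuit path edge: it lies on the connecting path of an unbalanced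
loose handcuff. -/
def IsCircuitPathEdge (Γ : SGraph V E) (e : E) : Prop :=
  ∃ (u w : V) (C₁ : Γ.Walk u u) (P : Γ.Walk u w) (C₂ : Γ.Walk w w),
    Γ.IsLooseHandcuff C₁ P C₂ ∧ e ∈ P.edges

/-- Adjacency via an edge. -/
def Adj (Γ : SGraph V E) (a b : V) : Prop := ∃ e, Γ.ends e = (a, b) ∨ Γ.ends e = (b, a)

/-- The set of connected components. -/
def Components (Γ : SGraph V E) : Type _ := Quot Γ.Adj

/-- The connected component of a vertex. -/
def comp (Γ : SGraph V E) (v : V) : Γ.Components := Quot.mk _ v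

/-- The number `k(Γ)` of connected components. -/
def kAll (Γ : SGraph V E) : ℕ := Nat.card Γ.Components

/-- A connected component is balanced if every cycle it contains is balanced. -/
def IsBalancedComponent (Γ : SGraph V E) (c : Γ.Components) : Prop :=
  ∀ v : V, Γ.comp v = c → ∀ W : Γ.Walk v v, Γ.IsCycle W → W.sgn = 1

/-- The number `k_b(Σ)` of balanced connected components. -/
def kb (Γ : SGraph V E) : ℕ := Nat.card {c : Γ.Components // Γ.IsBalancedComponent c}

/-- The number `k_u(Σ)` of unbalanced connected components. -/
def ku (Γ : SGraph V E) : ℕ := Nat.card {c : Γ.Components // ¬ Γ.IsBalancedComponent c}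

/-- A signed graph is balanced if all its cycles are balanced. -/
def Balanced (Γ : SGraph V E) : Prop :=
  ∀ (v : V) (W : Γ.Walk v v), Γ.IsCycle W → W.sgn = 1

/-- A signed graph is connected if it has exactly one connected component. -/
def Connected (Γ : SGraph V E) : Prop := Γ.kAll = 1

/-- The spanning subgraph `Σ \ Aᶜ` with edge set `A`. -/
def restrict (Γ : SGraph V E) (A : Set E) : SGraph V A :=
  { ends := fun e => Γ.ends e, sign := fun e => Γ.sign e }

/-- The signed Tutte polynomial (as a function of `x`, `y`, `z`):
`T_Σ(X,Y,Z) = Σ_{A⊆E} (X−1)^{k(Σ\Aᶜ)−k(Σ)} (Y−1)^{|A|−|V|+k_b(Σ\Aᶜ)} (Z−1)^{k_u(Σ\Aᶜ)}`. -/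
def signedTutte {K : Type*} [CommRing K] (Γ : SGraph V E) (x y z : K) : K :=
  ∑ᶠ A : Finset E,
    (x - 1) ^ ((Γ.restrict (A : Set E)).kAll - Γ.kAll) *
      (y - 1) ^ ((A.card + (Γ.restrict (A : Set E)).kb) - Nat.card V) *
        (z - 1) ^ (Γ.restrict (A : Set E)).ku

/-- Deletion of an edge. -/
def deleteEdge (Γ : SGraph V E) (e : E) : SGraph V {e' : E // e' ≠ e} :=
  { ends := fun e' => Γ.ends e'.1, sign := fun e' => Γ.sign e'.1 }

/-- The relation identifying the two endpoints of `e`. -/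
def contractRel (Γ : SGraph V E) (e : E) (a b : V) : Prop := (a, b) = Γ.ends e

/-- Contraction of an edge: the two endpoints are identified and the edge is
deleted.  (For a loop this is just deletion, as the identification is trivial.) -/
def contract (Γ : SGraph V E) (e : E) : SGraph (Quot (Γ.contractRel e)) {e' : E // e' ≠ e} :=
  { ends := fun e' => (Quot.mk _ (Γ.ends e'.1).1, Quot.mk _ (Γ.ends e'.1).2),
    sign := fun e' => Γ.sign e'.1 }

/-- `e` is a bridge: its deletion increases the number of connected components. -/
def IsBridge (Γ : SGraph V E) (e : E) : Prop := Γ.kAll < (Γ.deleteEdge e).kAll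

/-- An orientation of the half-edges, compatible with the signature. -/
def IsCompatible (Γ : SGraph V E) (ω : E → Bool → ℤˣ) : Prop :=
  ∀ e, Γ.sign e = -(ω e true * ω e false)

/-- A `G`-flow: Kirchhoff's law holds at every vertex. -/
def IsFlow (Γ : SGraph V E) (ω : E → Bool → ℤˣ) {G : Type*} [AddCommGroup G]
    (f : E → G) : Prop :=
  ∀ v : V,
    (∑ᶠ e : E, ((if Γ.endpt e true = v then (ω e true : ℤ) • f e else 0) +
      (if Γ.endpt e false = v then (ω e false : ℤ) • f e else 0))) = 0

/-- A `G`-tension: the alternating sum along every circuit walk vanishes. -/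
def IsTension (Γ : SGraph V E) (ω : E → Bool → ℤˣ) {G : Type*} [AddCommGroup G]
    (f : E → G) : Prop :=
  ∀ (v : V) (W : Γ.Walk v v), Γ.IsCircuitWalk W → W.tensionSum ω f = 0

end SGraph

/-- The doubling homomorphism `x ↦ x + x = 2x` of an abelian group. -/
def doubleHom (G : Type*) [AddCommGroup G] : G →+ G :=
  AddMonoidHom.mk' (fun x => x + x) (fun a b => add_add_add_comm a b a b)

/-- The subgroup `2G = {2x : x ∈ G}`. -/
def twoG (G : Type*) [AddCommGroup G] : AddSubgroup G := (doubleHom G).range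

/-- The `2`-torsion subgroup `G₂ = {x ∈ G : 2x = 0}`. -/
def torsion2 (G : Type*) [AddCommGroup G] : AddSubgroup G := (doubleHom G).ker

namespace SGraph

variable {V E : Type*}

/-- A `G`-potential difference: a `G`-tension whose sum around every unbalanced
cycle lies in `2G`. -/
def IsPotentialDifference (Γ : SGraph V E) (ω : E → Bool → ℤˣ) {G : Type*} [AddCommGroup G]
    (f : E → G) : Prop :=
  Γ.IsTension ω f ∧
    ∀ (v : V) (W : Γ.Walk v v), Γ.IsUnbalancedCycle W → W.edgeSum f ∈ twoG G

end SGraph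

namespace SGraph

variable {V E : Type*}

/-- Proper coloring by elements of a set `X` with involution `ι`: adjacent
endpoints of a positive edge get different colors, and for a negative edge the
`ι`-image of one endpoint's color differs from the other endpoint's color. -/
def IsProperInvColoring (Γ : SGraph V E) {X : Type*} (ι : X → X) (f : V → X) : Prop :=
  ∀ e : E, (Γ.sign e = 1 → f ((Γ.ends e).1) ≠ f ((Γ.ends e).2)) ∧
    (Γ.sign e = -1 → ι (f ((Γ.ends e).1)) ≠ f ((Γ.ends e).2))

/-- A proper `G`-coloring: for every edge `e = uv`, `f(u) ≠ f(v)` if `e` is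
positive and `-f(u) ≠ f(v)` if `e` is negative, i.e. `σ(e)•f(u) ≠ f(v)`. -/
def IsProperColoring (Γ : SGraph V E) {G : Type*} [AddCommGroup G] (f : V → G) : Prop :=
  ∀ e : E, ((Γ.sign e : ℤ) • f ((Γ.ends e).1)) ≠ f ((Γ.ends e).2)

/-- Zaslavsky's proper `n`-coloring: colors in `{0, ±1, …, ±n}` with
`f(u) ≠ σ(e)·f(v)` for every edge `e = uv`. -/
def IsProperNColoring (Γ : SGraph V E) (n : ℕ) (f : V → ℤ) : Prop :=
  (∀ v, |f v| ≤ (n : ℤ)) ∧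
    ∀ e : E, f ((Γ.ends e).1) ≠ (Γ.sign e : ℤ) * f ((Γ.ends e).2)

/-- `T ⊆ E` is a spanning tree: the spanning subgraph `(V,T)` is connected and
contains no cycle. -/
def IsSpanningTree (Γ : SGraph V E) (T : Set E) : Prop :=
  (Γ.restrict T).Connected ∧
    ∀ (v : V) (W : (Γ.restrict T).Walk v v), ¬ (Γ.restrict T).IsCycle W

/-- A connected basis of a connected signed graph: a spanning tree if `Σ` is
balanced; otherwise a spanning tree plus one extra edge closing an unbalanced
cycle. -/
def IsConnectedBasis (Γ : SGraph V E) (B : Set E) : Prop :=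
  (Γ.Balanced ∧ Γ.IsSpanningTree B) ∨
    (¬ Γ.Balanced ∧ ∃ (T : Set E) (e : E), Γ.IsSpanningTree T ∧ e ∉ T ∧ B = insert e T ∧
      ∀ (v : V) (W : (Γ.restrict B).Walk v v), (Γ.restrict B).IsCycle W → W.sgn = -1)

/-- Switching at a vertex `v`: the sign of every non-loop edge incident with `v`
is negated; loops keep their sign. -/
def switchAt (Γ : SGraph V E) (v : V) : SGraph V E :=
  { ends := Γ.ends,
    sign := fun e => if ((Γ.ends e).1 = v ↔ (Γ.ends e).2 = v) then Γ.sign e else -Γ.sign e }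

/-- Switching at a set `S` of vertices (the composite of the switchings at the
vertices of `S`): the sign of an edge is negated iff exactly one of its
endpoints lies in `S`. -/
def switchSet (Γ : SGraph V E) (S : Set V) : SGraph V E :=
  { ends := Γ.ends,
    sign := fun e => if ((Γ.ends e).1 ∈ S ↔ (Γ.ends e).2 ∈ S) then Γ.sign e else -Γ.sign e }

/-- Isomorphism of signed graphs (as undirected signed multigraphs). -/
def Iso {V₁ E₁ V₂ E₂ : Type*} (Γ₁ : SGraph V₁ E₁) (Γ₂ : SGraph V₂ E₂) : Prop :=
  ∃ (φ : V₁ ≃ V₂) (ψ : E₁ ≃ E₂), ∀ e : E₁,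
    (Γ₂.ends (ψ e) = (φ (Γ₁.ends e).1, φ (Γ₁.ends e).2) ∨
      Γ₂.ends (ψ e) = (φ (Γ₁.ends e).2, φ (Γ₁.ends e).1)) ∧
    Γ₂.sign (ψ e) = Γ₁.sign e

/-- Switching equivalence: isomorphism after switching at a set of vertices. -/
def SwitchEquiv {V₁ E₁ V₂ E₂ : Type*} (Γ₁ : SGraph V₁ E₁) (Γ₂ : SGraph V₂ E₂) : Prop :=
  ∃ S : Set V₁, Iso (Γ₁.switchSet S) Γ₂

/-- Disjoint union of signed graphs. -/
def disjUnion {V₁ E₁ V₂ E₂ : Type*} (Γ₁ : SGraph V₁ E₁) (Γ₂ : SGraph V₂ E₂) :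
    SGraph (V₁ ⊕ V₂) (E₁ ⊕ E₂) where
  ends := fun e => match e with
    | .inl e => (Sum.inl (Γ₁.ends e).1, Sum.inl (Γ₁.ends e).2)
    | .inr e => (Sum.inr (Γ₂.ends e).1, Sum.inr (Γ₂.ends e).2)
  sign := fun e => match e with
    | .inl e => Γ₁.sign e
    | .inr e => Γ₂.sign e

/-- The difference operator `δ : G^V → G^E`,
`(δg)(e) = ω(v,e)·g(v) + ω(u,e)·g(u)` for `e = uv`. -/
def deltaHom (Γ : SGraph V E) (ω : E → Bool → ℤˣ) (G : Type*) [AddCommGroup G] :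
    (V → G) →+ (E → G) :=
  AddMonoidHom.mk'
    (fun g e => (ω e true : ℤ) • g ((Γ.ends e).1) + (ω e false : ℤ) • g ((Γ.ends e).2))
    (by
      intro a b
      funext e
      simp only [Pi.add_apply, smul_add]
      abel)

end SGraph

end SignedGraphs

/-!
Root every component at a vertex, take parent steps along shortest walks to the roots as a
spanning forest, and let `τ v` be the sign of the forest path from `v` to its root. An edge `uv`
is consistent if `σ e = τ u τ v`; a component is balanced exactly when all its edges are.

A tension is determined by its values on the forest and on one inconsistent edge `e_c` in each
unbalanced component `c`: any other edge `e` lies on a circuit whose remaining edges are of that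
kind. It is the fundamental cycle of `e` if `e` is consistent; otherwise the fundamental cycles of
`e` and `e_c`, with a forest path, form a loose or tight handcuff, or a theta graph one of whose
cycles through `e` is balanced.

Conversely, any `ψ : V → G` vanishing at the roots and `κ` on the unbalanced components define a
potential `φ` on the double cover `V × {±1}` by `φ (v, τ v) = ψ v`, `φ (v, -τ v) = κ - ψ v`, whose
differences along the edges form a tension; tension sums from the roots recover `ψ` and `κ`.
This gives `|G| ^ (|V| - k) * |G| ^ k_u` tensions. The edge sum around an unbalanced cycle is
`κ` modulo `2G`, so the potential differences are those with `κ` in `2G`.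
-/

noncomputable section

namespace SGraph

variable {V E : Type*}

/-! ## Walks as lists of steps -/

section Steps

variable (Γ : SGraph V E)

def stepSrc (s : E × Bool) : V := Γ.endpt s.1 s.2

def stepTgt (s : E × Bool) : V := Γ.endpt s.1 (!s.2)

def IsStepWalk : List (E × Bool) → V → V → Prop
  | [], u, v => u = v
  | s :: l, u, v => u = Γ.stepSrc s ∧ IsStepWalk l (Γ.stepTgt s) v

def stepsSign (l : List (E × Bool)) : ℤˣ := (l.map fun s => Γ.sign s.1).prod

def stepsTension {G : Type*} [AddCommGroup G] (ω : E → Bool → ℤˣ) (f : E → G) :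
    List (E × Bool) → G
  | [] => 0
  | s :: l => (ω s.1 s.2 : ℤ) • f s.1 + (Γ.sign s.1 : ℤ) • stepsTension ω f l

end Steps

def reverseSteps (l : List (E × Bool)) : List (E × Bool) := l.reverse.map fun s => (s.1, !s.2)

variable {Γ : SGraph V E}

@[simp] lemma isStepWalk_nil {u v : V} : Γ.IsStepWalk [] u v ↔ u = v := Iff.rfl

@[simp] lemma isStepWalk_cons {s : E × Bool} {l : List (E × Bool)} {u v : V} :
    Γ.IsStepWalk (s :: l) u v ↔ u = Γ.stepSrc s ∧ Γ.IsStepWalk l (Γ.stepTgt s) v := Iff.rfl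

lemma isStepWalk_append {l₁ l₂ : List (E × Bool)} {u v : V} :
    Γ.IsStepWalk (l₁ ++ l₂) u v ↔ ∃ w, Γ.IsStepWalk l₁ u w ∧ Γ.IsStepWalk l₂ w v := by
  induction l₁ generalizing u with
  | nil => simp
  | cons s l ih => simp [ih, and_assoc]

lemma IsStepWalk.append {l₁ l₂ : List (E × Bool)} {u w v : V} (h₁ : Γ.IsStepWalk l₁ u w)
    (h₂ : Γ.IsStepWalk l₂ w v) : Γ.IsStepWalk (l₁ ++ l₂) u v :=
  isStepWalk_append.2 ⟨w, h₁, h₂⟩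

@[simp] lemma stepSrc_flip (s : E × Bool) : Γ.stepSrc (s.1, !s.2) = Γ.stepTgt s := rfl

@[simp] lemma stepTgt_flip (s : E × Bool) : Γ.stepTgt (s.1, !s.2) = Γ.stepSrc s := by
  simp [stepTgt, stepSrc]

lemma reverseSteps_cons (s : E × Bool) (l : List (E × Bool)) :
    reverseSteps (s :: l) = reverseSteps l ++ [(s.1, !s.2)] := by
  simp [reverseSteps]

lemma reverseSteps_append (l₁ l₂ : List (E × Bool)) :
    reverseSteps (l₁ ++ l₂) = reverseSteps l₂ ++ reverseSteps l₁ := by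
  simp [reverseSteps]

@[simp] lemma reverseSteps_reverseSteps (l : List (E × Bool)) :
    reverseSteps (reverseSteps l) = l := by
  simp [reverseSteps, Function.comp_def]

@[simp] lemma map_fst_reverseSteps (l : List (E × Bool)) :
    (reverseSteps l).map Prod.fst = (l.map Prod.fst).reverse := by
  simp [reverseSteps]

lemma map_stepSrc_reverseSteps (l : List (E × Bool)) :
    (reverseSteps l).map Γ.stepSrc = (l.map Γ.stepTgt).reverse := by
  simp [reverseSteps, Function.comp_def]

lemma map_stepTgt_reverseSteps (l : List (E × Bool)) :
    (reverseSteps l).map Γ.stepTgt = (l.map Γ.stepSrc).reverse := by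
  simp [reverseSteps, Function.comp_def]

lemma IsStepWalk.reverse {l : List (E × Bool)} {u v : V} (h : Γ.IsStepWalk l u v) :
    Γ.IsStepWalk (reverseSteps l) v u := by
  induction l generalizing u with
  | nil => exact h.symm
  | cons s l ih =>
    rw [reverseSteps_cons]
    exact (ih h.2).append ⟨rfl, by simpa using h.1.symm⟩

lemma IsStepWalk.srcs_append_eq {l : List (E × Bool)} {u v : V} (h : Γ.IsStepWalk l u v) :
    l.map Γ.stepSrc ++ [v] = u :: l.map Γ.stepTgt := by
  induction l generalizing u with
  | nil => rw [h]; rfl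
  | cons s l ih => simp only [List.map_cons, List.cons_append, h.1, ih h.2]

lemma IsStepWalk.verts_reverse {l : List (E × Bool)} {u v : V} (h : Γ.IsStepWalk l u v) :
    (reverseSteps l).map Γ.stepSrc ++ [u] = (l.map Γ.stepSrc ++ [v]).reverse := by
  rw [map_stepSrc_reverseSteps, ← List.reverse_cons, ← h.srcs_append_eq]

lemma IsStepWalk.stepTgt_mem {l : List (E × Bool)} {u v : V} (h : Γ.IsStepWalk l u v)
    {s : E × Bool} (hs : s ∈ l) : Γ.stepTgt s ∈ l.map Γ.stepSrc ++ [v] := by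
  rw [h.srcs_append_eq]
  exact List.mem_cons_of_mem _ (List.mem_map_of_mem hs)

lemma IsStepWalk.endpt_mem {l : List (E × Bool)} {u v : V} (h : Γ.IsStepWalk l u v)
    {g : E} (hg : g ∈ l.map Prod.fst) (b : Bool) : Γ.endpt g b ∈ l.map Γ.stepSrc ++ [v] := by
  obtain ⟨⟨g, d⟩, hs, rfl⟩ := List.exists_of_mem_map hg
  have hsrc : Γ.stepSrc (g, d) ∈ l.map Γ.stepSrc ++ [v] :=
    List.mem_append_left _ (List.mem_map_of_mem hs)
  have htgt := h.stepTgt_mem hs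
  cases b <;> cases d <;> assumption

lemma IsStepWalk.head_mem {l : List (E × Bool)} {u v : V} (h : Γ.IsStepWalk l u v)
    (hne : l ≠ []) : u ∈ l.map Γ.stepSrc := by
  obtain ⟨s, l', rfl⟩ := List.exists_cons_of_ne_nil hne
  simp [h.1]

lemma IsStepWalk.mem_srcs_of_closed {l : List (E × Bool)} {v x : V} (h : Γ.IsStepWalk l v v)
    (hne : l ≠ []) (hx : x ∈ l.map Γ.stepSrc ++ [v]) : x ∈ l.map Γ.stepSrc := by
  rcases List.mem_append.mp hx with hx | hx
  · exact hx
  · rw [List.mem_singleton.mp hx]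
    exact h.head_mem hne

@[simp] lemma stepsSign_nil : Γ.stepsSign [] = 1 := rfl

@[simp] lemma stepsSign_cons (s : E × Bool) (l : List (E × Bool)) :
    Γ.stepsSign (s :: l) = Γ.sign s.1 * Γ.stepsSign l := by
  simp [stepsSign]

@[simp] lemma stepsSign_append (l₁ l₂ : List (E × Bool)) :
    Γ.stepsSign (l₁ ++ l₂) = Γ.stepsSign l₁ * Γ.stepsSign l₂ := by
  simp [stepsSign]

lemma stepsSign_perm {l₁ l₂ : List (E × Bool)} (h : l₁.Perm l₂) :
    Γ.stepsSign l₁ = Γ.stepsSign l₂ :=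
  (h.map _).prod_eq

@[simp] lemma stepsSign_reverseSteps (l : List (E × Bool)) :
    Γ.stepsSign (reverseSteps l) = Γ.stepsSign l := by
  simp only [stepsSign, reverseSteps, List.map_map, List.map_reverse, List.prod_reverse]
  rfl

lemma units_smul_smul {G : Type*} [AddCommGroup G] (u : ℤˣ) (x : G) :
    (u : ℤ) • (u : ℤ) • x = x := by
  rw [smul_smul, ← Units.val_mul, Int.units_mul_self, Units.val_one, one_smul]

lemma IsCompatible.apply_not {ω : E → Bool → ℤˣ} (hω : Γ.IsCompatible ω) (e : E) (d : Bool) :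
    ω e (!d) = -(Γ.sign e * ω e d) := by
  have h := hω e
  rcases Int.units_eq_one_or (ω e true) with h1 | h1 <;>
    rcases Int.units_eq_one_or (ω e false) with h2 | h2 <;>
      cases d <;> simp_all

section Tension

variable {G : Type*} [AddCommGroup G] (ω : E → Bool → ℤˣ) (f : E → G)

@[simp] lemma stepsTension_nil : Γ.stepsTension ω f [] = 0 := rfl

lemma stepsTension_cons (s : E × Bool) (l : List (E × Bool)) :
    Γ.stepsTension ω f (s :: l) =
      (ω s.1 s.2 : ℤ) • f s.1 + (Γ.sign s.1 : ℤ) • Γ.stepsTension ω f l := rfl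

lemma stepsTension_eq_zero {l : List (E × Bool)} (hf : ∀ e ∈ l.map Prod.fst, f e = 0) :
    Γ.stepsTension ω f l = 0 := by
  induction l with
  | nil => rfl
  | cons s l ih =>
    rw [stepsTension_cons, hf s.1 (by simp), ih fun e he => hf e (by simp [he])]
    simp

lemma stepsTension_sub (g : E → G) (l : List (E × Bool)) :
    Γ.stepsTension ω (f - g) l = Γ.stepsTension ω f l - Γ.stepsTension ω g l := by
  induction l with
  | nil => simp
  | cons s l ih =>
    simp only [stepsTension_cons, ih, Pi.sub_apply, smul_sub]
    abel

/-- Modulo `2G` the signs in a tension sum do not matter. -/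
lemma stepsTension_sub_sum_mem_twoG (l : List (E × Bool)) :
    Γ.stepsTension ω f l - (l.map fun s => f s.1).sum ∈ twoG G := by
  have unit_smul_sub_mem : ∀ (u : ℤˣ) (x : G), (u : ℤ) • x - x ∈ twoG G := by
    intro u x
    rcases Int.units_eq_one_or u with rfl | rfl
    · simp
    · exact ⟨-x, by simp [doubleHom]; abel⟩
  induction l with
  | nil => simp
  | cons s l ih =>
    have key : Γ.stepsTension ω f (s :: l) - ((s :: l).map fun s => f s.1).sum =
        ((ω s.1 s.2 : ℤ) • f s.1 - f s.1) +
          ((Γ.sign s.1 : ℤ) • Γ.stepsTension ω f l - Γ.stepsTension ω f l) +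
          (Γ.stepsTension ω f l - (l.map fun s => f s.1).sum) := by
      rw [stepsTension_cons, List.map_cons, List.sum_cons]
      abel
    rw [key]
    exact add_mem (add_mem (unit_smul_sub_mem _ _) (unit_smul_sub_mem _ _)) ih

lemma exists_stepsTension_eq_units_smul (e : E) {l : List (E × Bool)}
    (hcount : (l.map Prod.fst).count e = 1) (hf : ∀ g ∈ l.map Prod.fst, g ≠ e → f g = 0) :
    ∃ u : ℤˣ, Γ.stepsTension ω f l = (u : ℤ) • f e := by
  induction l with
  | nil => simp at hcount
  | cons s l ih =>
    rw [List.map_cons] at hcount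
    by_cases hc : s.1 = e
    · rw [hc, List.count_cons_self, add_eq_right, List.count_eq_zero] at hcount
      refine ⟨ω s.1 s.2, ?_⟩
      rw [stepsTension_cons, stepsTension_eq_zero ω f fun g hg => hf g (by simp [hg])
        (by rintro rfl; exact hcount hg), hc]
      simp
    · rw [List.count_cons_of_ne hc] at hcount
      obtain ⟨u, hu⟩ := ih hcount fun g hg => hf g (by simp [hg])
      refine ⟨Γ.sign s.1 * u, ?_⟩
      rw [stepsTension_cons, hf s.1 (by simp) hc, hu, Units.val_mul, mul_smul]
      simp

end Tension

/-! ## Circuit walks -/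

namespace Walk

lemma isStepWalk_steps : ∀ {u v : V} (W : Γ.Walk u v), Γ.IsStepWalk W.steps u v
  | _, _, .nil _ => rfl
  | _, _, .cons _ _ p => ⟨rfl, p.isStepWalk_steps⟩

lemma sgn_eq_stepsSign : ∀ {u v : V} (W : Γ.Walk u v), W.sgn = Γ.stepsSign W.steps
  | _, _, .nil _ => rfl
  | _, _, .cons e d p => by rw [Walk.sgn, Walk.steps, stepsSign_cons, p.sgn_eq_stepsSign]

lemma tensionSum_eq_stepsTension {G : Type*} [AddCommGroup G] (ω : E → Bool → ℤˣ)
    (f : E → G) : ∀ {u v : V} (W : Γ.Walk u v), W.tensionSum ω f = Γ.stepsTension ω f W.steps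
  | _, _, .nil _ => rfl
  | _, _, .cons e d p => by
    rw [Walk.tensionSum, Walk.steps, stepsTension_cons, p.tensionSum_eq_stepsTension]

lemma edges_eq_map_steps : ∀ {u v : V} (W : Γ.Walk u v), W.edges = W.steps.map Prod.fst
  | _, _, .nil _ => rfl
  | _, _, .cons e d p => by rw [Walk.edges, Walk.steps, List.map_cons, p.edges_eq_map_steps]

lemma edgeSum_eq {G : Type*} [AddCommGroup G] (f : E → G) {u v : V} (W : Γ.Walk u v) :
    W.edgeSum f = (W.steps.map fun s => f s.1).sum := by
  rw [Walk.edgeSum, W.edges_eq_map_steps, List.map_map]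
  rfl

lemma verts_eq_map_steps : ∀ {u v : V} (W : Γ.Walk u v),
    W.verts = W.steps.map Γ.stepSrc ++ [v]
  | _, _, .nil _ => rfl
  | _, _, .cons e d p => by
    rw [Walk.verts, Walk.steps, List.map_cons, p.verts_eq_map_steps]
    rfl

lemma srcs_eq_map_steps {u v : V} (W : Γ.Walk u v) : W.srcs = W.steps.map Γ.stepSrc := by
  rw [Walk.srcs, W.verts_eq_map_steps, List.dropLast_concat]

lemma steps_append : ∀ {u v w : V} (p : Γ.Walk u v) (q : Γ.Walk v w),
    (p.append q).steps = p.steps ++ q.steps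
  | _, _, _, .nil _, _ => rfl
  | _, _, _, .cons e d p, q => by
    rw [Walk.append, Walk.steps, Walk.steps, List.cons_append, Walk.steps_append p q]

lemma append_nil : ∀ {u v : V} (p : Γ.Walk u v), p.append (.nil v) = p
  | _, _, .nil _ => rfl
  | _, _, .cons e d p => by rw [Walk.append, p.append_nil]

end Walk

variable (Γ) in
def walkOfSteps : ∀ (l : List (E × Bool)) (u v : V), Γ.IsStepWalk l u v → Γ.Walk u v
  | [], u, _, h => h ▸ Walk.nil u
  | s :: l, _, v, h =>
    h.1 ▸ (Walk.cons s.1 s.2 (walkOfSteps l (Γ.stepTgt s) v h.2) : Γ.Walk (Γ.stepSrc s) v)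

@[simp] lemma steps_walkOfSteps (l : List (E × Bool)) :
    ∀ (u v : V) (h : Γ.IsStepWalk l u v), (Γ.walkOfSteps l u v h).steps = l := by
  induction l with
  | nil => rintro u v rfl; rfl
  | cons s l ih =>
    rintro u v ⟨rfl, h⟩
    exact congrArg (List.cons (s.1, s.2)) (ih _ _ h)

lemma walkOfSteps_append (l₁ l₂ : List (E × Bool)) :
    ∀ (u w v : V) (h₁ : Γ.IsStepWalk l₁ u w) (h₂ : Γ.IsStepWalk l₂ w v)
      (h : Γ.IsStepWalk (l₁ ++ l₂) u v),
      Γ.walkOfSteps (l₁ ++ l₂) u v h =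
        (Γ.walkOfSteps l₁ u w h₁).append (Γ.walkOfSteps l₂ w v h₂) := by
  induction l₁ with
  | nil => rintro u w v rfl h₂ h; rfl
  | cons s l ih =>
    rintro u w v ⟨rfl, h₁⟩ h₂ ⟨_, h⟩
    exact congrArg (Walk.cons s.1 s.2) (ih _ _ _ h₁ h₂ h)

variable (Γ) in
def IsCycleSteps (l : List (E × Bool)) (v : V) : Prop :=
  Γ.IsStepWalk l v v ∧ l ≠ [] ∧ (l.map Γ.stepSrc).Nodup ∧ (l.map Prod.fst).Nodup

variable (Γ) in
def IsPathSteps (l : List (E × Bool)) (u v : V) : Prop :=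
  Γ.IsStepWalk l u v ∧ (l.map Γ.stepSrc ++ [v]).Nodup

variable (Γ) in
def IsCircuitSteps (l : List (E × Bool)) (v : V) : Prop :=
  ∃ h : Γ.IsStepWalk l v v, Γ.IsCircuitWalk (Γ.walkOfSteps l v v h)

lemma IsCycleSteps.isCycle {l : List (E × Bool)} {v : V} (h : Γ.IsCycleSteps l v) :
    Γ.IsCycle (Γ.walkOfSteps l v v h.1) := by
  refine ⟨?_, ?_, ?_⟩
  · simpa [Walk.edges_eq_map_steps] using h.2.1
  · simpa [Walk.srcs_eq_map_steps] using h.2.2.1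
  · simpa [Walk.edges_eq_map_steps] using h.2.2.2

lemma IsCycleSteps.isUnbalancedCycle {l : List (E × Bool)} {v : V} (h : Γ.IsCycleSteps l v)
    (hs : Γ.stepsSign l = -1) : Γ.IsUnbalancedCycle (Γ.walkOfSteps l v v h.1) :=
  ⟨h.isCycle, by rw [Walk.sgn_eq_stepsSign, steps_walkOfSteps, hs]⟩

lemma isCircuitWalk_of_isBasicCircuitWalk {v : V} {W : Γ.Walk v v}
    (h : Γ.IsBasicCircuitWalk W) : Γ.IsCircuitWalk W :=
  ⟨v, W, .nil v, rfl, by rwa [Walk.append_nil]⟩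

lemma IsCycleSteps.isCircuitSteps {l : List (E × Bool)} {v : V} (h : Γ.IsCycleSteps l v)
    (hs : Γ.stepsSign l = 1) : Γ.IsCircuitSteps l v :=
  ⟨h.1, isCircuitWalk_of_isBasicCircuitWalk <| Or.inl
    ⟨h.isCycle, by rw [Walk.sgn_eq_stepsSign, steps_walkOfSteps, hs]⟩⟩

lemma isCircuitSteps_tight {l₁ l₂ : List (E × Bool)} {x : V}
    (h₁ : Γ.IsCycleSteps l₁ x) (hs₁ : Γ.stepsSign l₁ = -1)
    (h₂ : Γ.IsCycleSteps l₂ x) (hs₂ : Γ.stepsSign l₂ = -1)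
    (hshare : ∀ y ∈ l₁.map Γ.stepSrc, y ∈ l₂.map Γ.stepSrc → y = x)
    (hdisj : ∀ g ∈ l₁.map Prod.fst, g ∉ l₂.map Prod.fst) :
    Γ.IsCircuitSteps (l₁ ++ l₂) x := by
  refine ⟨h₁.1.append h₂.1, isCircuitWalk_of_isBasicCircuitWalk (Or.inr (Or.inl
    ⟨_, _, ⟨h₁.isUnbalancedCycle hs₁, h₂.isUnbalancedCycle hs₂, ?_, ?_⟩,
      walkOfSteps_append l₁ l₂ x x x h₁.1 h₂.1 _⟩))⟩
  · simpa [Walk.srcs_eq_map_steps] using hshare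
  · simpa [Walk.edges_eq_map_steps] using hdisj

lemma isCircuitSteps_loose {l₁ p l₂ : List (E × Bool)} {x y : V}
    (h₁ : Γ.IsCycleSteps l₁ x) (hs₁ : Γ.stepsSign l₁ = -1)
    (hp : Γ.IsPathSteps p x y)
    (h₂ : Γ.IsCycleSteps l₂ y) (hs₂ : Γ.stepsSign l₂ = -1)
    (hdisj : ∀ z ∈ l₁.map Γ.stepSrc, z ∉ l₂.map Γ.stepSrc)
    (hp₁ : ∀ z ∈ p.map Γ.stepSrc ++ [y], z ∈ l₁.map Γ.stepSrc → z = x)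
    (hp₂ : ∀ z ∈ p.map Γ.stepSrc ++ [y], z ∈ l₂.map Γ.stepSrc → z = y)
    (hpe : ∀ g ∈ p.map Prod.fst, g ∉ l₁.map Prod.fst ∧ g ∉ l₂.map Prod.fst) :
    Γ.IsCircuitSteps (l₁ ++ (p ++ (l₂ ++ reverseSteps p))) x := by
  have hpne : p ≠ [] := by
    rintro rfl
    exact hdisj x (h₁.1.head_mem h₁.2.1) (hp.1 ▸ h₂.1.head_mem h₂.2.1)
  have hrev := hp.1.reverse
  refine ⟨h₁.1.append (hp.1.append (h₂.1.append hrev)),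
    isCircuitWalk_of_isBasicCircuitWalk (Or.inr (Or.inr
      ⟨y, _, Γ.walkOfSteps p x y hp.1, _, Γ.walkOfSteps (reverseSteps p) y x hrev,
        ⟨h₁.isUnbalancedCycle hs₁, h₂.isUnbalancedCycle hs₂, ⟨?_, ?_⟩, ?_, ?_, ?_, ?_⟩, ?_,
        ?_⟩))⟩
  · simpa [Walk.edges_eq_map_steps] using hpne
  · simpa [Walk.verts_eq_map_steps] using hp.2
  · simpa [Walk.srcs_eq_map_steps] using hdisj
  · simpa [Walk.srcs_eq_map_steps, Walk.verts_eq_map_steps] using hp₁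
  · simpa [Walk.srcs_eq_map_steps, Walk.verts_eq_map_steps] using hp₂
  · simpa [Walk.edges_eq_map_steps] using hpe
  · simp [Walk.IsReverseOf, reverseSteps]
  · rw [walkOfSteps_append _ _ x x x h₁.1 (hp.1.append (h₂.1.append hrev)),
      walkOfSteps_append _ _ x y x hp.1 (h₂.1.append hrev),
      walkOfSteps_append _ _ y y x h₂.1 hrev]

lemma IsCircuitWalk.stepsSign_steps {v : V} {W : Γ.Walk v v} (h : Γ.IsCircuitWalk W) :
    Γ.stepsSign W.steps = 1 := by
  obtain ⟨u, A, B, rfl, hbasic⟩ := h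
  rw [Walk.steps_append, stepsSign_append, mul_comm, ← stepsSign_append, ← Walk.steps_append]
  rcases hbasic with hbal | ⟨C₁, C₂, hhc, heq⟩ | ⟨w, C₁, P, C₂, Q, hhc, hrev, heq⟩
  · rw [← Walk.sgn_eq_stepsSign, hbal.2]
  · rw [heq, Walk.steps_append, stepsSign_append, ← Walk.sgn_eq_stepsSign,
      ← Walk.sgn_eq_stepsSign, hhc.1.2, hhc.2.1.2]
    simp
  · have hQ : Γ.stepsSign Q.steps = Γ.stepsSign P.steps := by
      rw [hrev]
      exact stepsSign_reverseSteps P.steps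
    rw [heq, Walk.steps_append, Walk.steps_append, Walk.steps_append, stepsSign_append,
      stepsSign_append, stepsSign_append, hQ, ← C₁.sgn_eq_stepsSign, ← C₂.sgn_eq_stepsSign,
      hhc.1.2, hhc.2.1.2]
    rcases Int.units_eq_one_or (Γ.stepsSign P.steps) with h | h <;> simp [h]

section Tension

variable {G : Type*} [AddCommGroup G] {ω : E → Bool → ℤˣ} {f : E → G}

lemma IsTension.stepsTension_eq_zero (hf : Γ.IsTension ω f) {l : List (E × Bool)} {v : V}
    (hl : Γ.IsCircuitSteps l v) : Γ.stepsTension ω f l = 0 := by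
  obtain ⟨h, hc⟩ := hl
  simpa [Walk.tensionSum_eq_stepsTension] using hf v _ hc

lemma IsTension.eq_zero_of_isCircuitSteps (hf : Γ.IsTension ω f) {l : List (E × Bool)} {v : V}
    (hl : Γ.IsCircuitSteps l v) {e : E} (hcount : (l.map Prod.fst).count e = 1)
    (hzero : ∀ g ∈ l.map Prod.fst, g ≠ e → f g = 0) : f e = 0 := by
  obtain ⟨u, hu⟩ := exists_stepsTension_eq_units_smul ω f e hcount hzero
  rw [hf.stepsTension_eq_zero hl] at hu
  simpa [units_smul_smul] using congrArg (fun y => (u : ℤ) • y) hu.symm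

lemma IsTension.sub {f' : E → G} (hf : Γ.IsTension ω f) (hf' : Γ.IsTension ω f') :
    Γ.IsTension ω (f - f') := by
  intro v W hW
  have h := hf v W hW
  have h' := hf' v W hW
  rw [Walk.tensionSum_eq_stepsTension] at h h' ⊢
  rw [stepsTension_sub, h, h', sub_zero]

end Tension

/-! ## Paths and cycles -/

lemma IsStepWalk.exists_split {l : List (E × Bool)} {u v x : V} (h : Γ.IsStepWalk l u v)
    (hx : x ∈ l.map Γ.stepSrc) :
    ∃ l₁ l₂, l = l₁ ++ l₂ ∧ Γ.IsStepWalk l₁ u x ∧ Γ.IsStepWalk l₂ x v ∧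
      x ∈ l₂.map Γ.stepSrc := by
  induction l generalizing u with
  | nil => simp at hx
  | cons s l ih =>
    by_cases hc : Γ.stepSrc s = x
    · exact ⟨[], s :: l, rfl, h.1.trans hc, hc ▸ ⟨rfl, h.2⟩, by simp [hc]⟩
    · have hx' : x ∈ l.map Γ.stepSrc := by
        simpa [Ne.symm hc] using hx
      obtain ⟨l₁, l₂, rfl, h₁, h₂, hmem⟩ := ih h.2 hx'
      exact ⟨s :: l₁, l₂, rfl, ⟨h.1, h₁⟩, h₂, hmem⟩

lemma IsStepWalk.exists_rotation {l : List (E × Bool)} {v x : V} (h : Γ.IsStepWalk l v v)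
    (hx : x ∈ l.map Γ.stepSrc) : ∃ r, Γ.IsStepWalk r x x ∧ r.Perm l := by
  obtain ⟨l₁, l₂, rfl, h₁, h₂, _⟩ := h.exists_split hx
  exact ⟨l₂ ++ l₁, h₂.append h₁, List.perm_append_comm⟩

lemma IsStepWalk.exists_isPathSteps {l : List (E × Bool)} {u v : V} (h : Γ.IsStepWalk l u v) :
    ∃ p, Γ.IsPathSteps p u v ∧ ∀ g ∈ p.map Prod.fst, g ∈ l.map Prod.fst := by
  induction l generalizing u with
  | nil => exact ⟨[], ⟨h, by simp⟩, by simp⟩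
  | cons s l ih =>
    obtain ⟨p, hp, hpl⟩ := ih h.2
    have hpl' : ∀ g ∈ p.map Prod.fst, g ∈ (s :: l).map Prod.fst :=
      fun g hg => List.mem_cons_of_mem _ (hpl g hg)
    by_cases hu : u ∈ p.map Γ.stepSrc ++ [v]
    · rcases List.mem_append.mp hu with hu | hu
      · obtain ⟨p₁, p₂, rfl, -, h₂, -⟩ := hp.1.exists_split hu
        refine ⟨p₂, ⟨h₂, ?_⟩, fun g hg => hpl' g (by simp [hg])⟩
        exact hp.2.sublist (by simp)
      · rw [List.mem_singleton.mp hu]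
        exact ⟨[], ⟨rfl, by simp⟩, by simp⟩
    · exact ⟨s :: p, ⟨⟨h.1, hp.1⟩, List.nodup_cons.mpr ⟨h.1 ▸ hu, hp.2⟩⟩, by
        rintro g (_ | ⟨_, hg⟩)
        · simp
        · exact hpl' g hg⟩

lemma IsPathSteps.nodup_srcs {l : List (E × Bool)} {u v : V} (h : Γ.IsPathSteps l u v) :
    (l.map Γ.stepSrc).Nodup :=
  (List.nodup_append.mp h.2).1

lemma IsPathSteps.end_not_mem_srcs {l : List (E × Bool)} {u v : V} (h : Γ.IsPathSteps l u v) :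
    v ∉ l.map Γ.stepSrc :=
  fun hv => (List.nodup_append.mp h.2).2.2 v hv v (List.mem_singleton_self v) rfl

/-- An edge used again later would have the start of the path among the later vertices. -/
lemma IsPathSteps.nodup_edges {l : List (E × Bool)} {u v : V} (h : Γ.IsPathSteps l u v) :
    (l.map Prod.fst).Nodup := by
  induction l generalizing u with
  | nil => simp
  | cons s l ih =>
    obtain ⟨⟨rfl, hw⟩, hnd⟩ := h
    rw [List.map_cons, List.cons_append, List.nodup_cons] at hnd
    refine List.nodup_cons.mpr ⟨fun hs => hnd.1 ?_, ih ⟨hw, hnd.2⟩⟩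
    exact hw.endpt_mem hs s.2

lemma IsStepWalk.start_mem {l : List (E × Bool)} {u v : V} (h : Γ.IsStepWalk l u v) :
    u ∈ l.map Γ.stepSrc ++ [v] := by
  rw [h.srcs_append_eq]
  exact List.mem_cons_self

lemma IsPathSteps.left {l₁ l₂ : List (E × Bool)} {u w v : V}
    (h : Γ.IsPathSteps (l₁ ++ l₂) u v) (h₁ : Γ.IsStepWalk l₁ u w) (h₂ : Γ.IsStepWalk l₂ w v) :
    Γ.IsPathSteps l₁ u w := by
  refine ⟨h₁, h.2.sublist ?_⟩
  rw [List.map_append, List.append_assoc, h₂.srcs_append_eq]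
  exact List.Sublist.append_left (by simp) _

lemma IsPathSteps.right {l₁ l₂ : List (E × Bool)} {u w v : V}
    (h : Γ.IsPathSteps (l₁ ++ l₂) u v) (h₂ : Γ.IsStepWalk l₂ w v) :
    Γ.IsPathSteps l₂ w v :=
  ⟨h₂, h.2.sublist (by simp)⟩

lemma IsPathSteps.reverse {l : List (E × Bool)} {u v : V} (h : Γ.IsPathSteps l u v) :
    Γ.IsPathSteps (reverseSteps l) v u := by
  refine ⟨h.1.reverse, ?_⟩
  rw [h.1.verts_reverse, List.nodup_reverse]
  exact h.2

lemma IsPathSteps.eq_nil_of_closed {l₁ M l₂ : List (E × Bool)} {u v p : V}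
    (h : Γ.IsPathSteps (l₁ ++ (M ++ l₂)) u v) (hM : Γ.IsStepWalk M p p)
    (h₂ : Γ.IsStepWalk l₂ p v) : M = [] := by
  by_contra hne
  have hnd := h.2
  simp only [List.map_append, List.append_assoc, List.nodup_append] at hnd
  exact hnd.2.1.2.2 p (hM.head_mem hne) p h₂.start_mem rfl

lemma IsStepWalk.exists_firstHit (P : V → Prop) {l : List (E × Bool)} {u v : V}
    (h : Γ.IsStepWalk l u v) (hP : ∃ z ∈ l.map Γ.stepSrc ++ [v], P z) :
    ∃ l₁ l₂ w, l = l₁ ++ l₂ ∧ Γ.IsStepWalk l₁ u w ∧ Γ.IsStepWalk l₂ w v ∧ P w ∧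
      ∀ z ∈ l₁.map Γ.stepSrc, ¬ P z := by
  induction l generalizing u with
  | nil =>
    obtain ⟨z, hz, hPz⟩ := hP
    rw [List.map_nil, List.nil_append, List.mem_singleton] at hz
    exact ⟨[], [], v, rfl, h, rfl, hz ▸ hPz, by simp⟩
  | cons s l ih =>
    by_cases hs : P (Γ.stepSrc s)
    · exact ⟨[], s :: l, u, rfl, rfl, h, h.1 ▸ hs, by simp⟩
    · obtain ⟨z, hz, hPz⟩ := hP
      have hz' : z ∈ l.map Γ.stepSrc ++ [v] := by
        rcases List.mem_cons.mp hz with rfl | hz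
        · exact absurd hPz hs
        · exact hz
      obtain ⟨l₁, l₂, w, rfl, h₁, h₂, hw, hno⟩ := ih h.2 ⟨z, hz', hPz⟩
      refine ⟨s :: l₁, l₂, w, rfl, ⟨h.1, h₁⟩, h₂, hw, ?_⟩
      rintro z (_ | ⟨_, hz⟩)
      exacts [hs, hno z hz]

lemma IsStepWalk.exists_lastHit (P : V → Prop) {l : List (E × Bool)} {u v : V}
    (h : Γ.IsStepWalk l u v) (hP : ∃ z ∈ l.map Γ.stepSrc ++ [v], P z) :
    ∃ l₁ l₂ w, l = l₁ ++ l₂ ∧ Γ.IsStepWalk l₁ u w ∧ Γ.IsStepWalk l₂ w v ∧ P w ∧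
      ∀ z ∈ l₂.map Γ.stepTgt, ¬ P z := by
  have hP' : ∃ z ∈ (reverseSteps l).map Γ.stepSrc ++ [u], P z := by
    obtain ⟨z, hz, hPz⟩ := hP
    exact ⟨z, by rwa [h.verts_reverse, List.mem_reverse], hPz⟩
  obtain ⟨m₁, m₂, w, hm, h₁, h₂, hw, hno⟩ := h.reverse.exists_firstHit P hP'
  refine ⟨reverseSteps m₂, reverseSteps m₁, w, ?_, h₂.reverse, h₁.reverse, hw, ?_⟩
  · rw [← reverseSteps_append, ← hm, reverseSteps_reverseSteps]
  · intro z hz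
    rw [map_stepTgt_reverseSteps, List.mem_reverse] at hz
    exact hno z hz

lemma IsCycleSteps.rotate {l : List (E × Bool)} {v x : V} (h : Γ.IsCycleSteps l v)
    (hx : x ∈ l.map Γ.stepSrc) : ∃ r, Γ.IsCycleSteps r x ∧ r.Perm l := by
  obtain ⟨r, hr, hperm⟩ := h.1.exists_rotation hx
  refine ⟨r, ⟨hr, ?_, (hperm.map _).nodup_iff.mpr h.2.2.1, (hperm.map _).nodup_iff.mpr h.2.2.2⟩,
    hperm⟩
  rintro rfl
  exact h.2.1 hperm.symm.eq_nil

lemma IsCycleSteps.endpt_mem {l : List (E × Bool)} {v : V} (h : Γ.IsCycleSteps l v) {g : E}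
    (hg : g ∈ l.map Prod.fst) (b : Bool) : Γ.endpt g b ∈ l.map Γ.stepSrc :=
  h.1.mem_srcs_of_closed h.2.1 (h.1.endpt_mem hg b)

/-- The two arcs from `p` to `q` of an unbalanced cycle have opposite signs, so one of them has
sign `-t`. -/
lemma IsCycleSteps.exists_arc {r : List (E × Bool)} {p q : V} (hr : Γ.IsCycleSteps r p)
    (hq : q ∈ r.map Γ.stepSrc) (hpq : p ≠ q) (t : ℤˣ) (hs : Γ.stepsSign r = -1) :
    ∃ A, Γ.IsPathSteps A p q ∧ (∀ z ∈ A.map Γ.stepSrc ++ [q], z ∈ r.map Γ.stepSrc) ∧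
      (∀ g ∈ A.map Prod.fst, g ∈ r.map Prod.fst) ∧ Γ.stepsSign A = -t := by
  obtain ⟨A₁, A₂, rfl, h₁, h₂, hqA₂⟩ := hr.1.exists_split hq
  have hnd := hr.2.2.1
  rw [List.map_append, List.nodup_append] at hnd
  have hpA₁ : p ∈ A₁.map Γ.stepSrc := h₁.head_mem (by rintro rfl; exact hpq h₁)
  have hp₁ : Γ.IsPathSteps A₁ p q := by
    refine ⟨h₁, List.nodup_append.mpr ⟨hnd.1, by simp, ?_⟩⟩
    intro z hz y hy
    rw [List.mem_singleton.mp hy]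
    exact hnd.2.2 z hz q hqA₂
  have hp₂ : Γ.IsPathSteps A₂ q p := by
    refine ⟨h₂, List.nodup_append.mpr ⟨hnd.2.1, by simp, ?_⟩⟩
    intro z hz y hy
    rw [List.mem_singleton.mp hy]
    exact (hnd.2.2 p hpA₁ z hz).symm
  have hsign : Γ.stepsSign A₁ * Γ.stepsSign A₂ = -1 := by rwa [← stepsSign_append]
  by_cases hA₁ : Γ.stepsSign A₁ = -t
  · refine ⟨A₁, hp₁, fun z hz => ?_, fun g hg => by simp [hg], hA₁⟩
    rw [List.map_append]
    rcases List.mem_append.mp hz with hz | hz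
    · exact List.mem_append_left _ hz
    · exact List.mem_append_right _ (List.mem_singleton.mp hz ▸ hqA₂)
  · refine ⟨reverseSteps A₂, hp₂.reverse, fun z hz => ?_, fun g hg => ?_, ?_⟩
    · rw [h₂.verts_reverse, List.mem_reverse] at hz
      rw [List.map_append]
      rcases List.mem_append.mp hz with hz | hz
      · exact List.mem_append_right _ hz
      · exact List.mem_append_left _ (List.mem_singleton.mp hz ▸ hpA₁)
    · rw [map_fst_reverseSteps, List.mem_reverse] at hg
      simp [hg]
    · rw [stepsSign_reverseSteps]
      rw [Int.units_ne_iff_eq_neg.symm.not, not_not] at hA₁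
      rcases Int.units_eq_one_or t with rfl | rfl <;>
        rcases Int.units_eq_one_or (Γ.stepsSign A₂) with h | h <;> simp_all

/-! ## The spanning forest -/

lemma comp_stepSrc (s : E × Bool) : Γ.comp (Γ.stepSrc s) = Γ.comp (Γ.stepTgt s) := by
  refine Quot.sound ⟨s.1, ?_⟩
  rcases s with ⟨e, _ | _⟩
  · exact Or.inr rfl
  · exact Or.inl rfl

lemma comp_ends (g : E) : Γ.comp (Γ.ends g).1 = Γ.comp (Γ.ends g).2 := comp_stepSrc (g, true)

lemma IsStepWalk.comp_eq {l : List (E × Bool)} {u v : V} (h : Γ.IsStepWalk l u v) :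
    Γ.comp u = Γ.comp v := by
  induction l generalizing u with
  | nil => rw [h]
  | cons s l ih => rw [h.1, comp_stepSrc s, ih h.2]

lemma IsStepWalk.comp_eq_of_mem {l : List (E × Bool)} {u v x : V} (h : Γ.IsStepWalk l u v)
    (hx : x ∈ l.map Γ.stepSrc) : Γ.comp x = Γ.comp u := by
  obtain ⟨l₁, -, -, h₁, -, -⟩ := h.exists_split hx
  exact h₁.comp_eq.symm

lemma exists_isStepWalk_of_comp_eq {u v : V} (h : Γ.comp u = Γ.comp v) :
    ∃ l, Γ.IsStepWalk l u v := by
  have h' := Quot.eqvGen_exact h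
  clear h
  induction h' with
  | rel a b hab =>
    obtain ⟨e, he | he⟩ := hab
    · exact ⟨[(e, true)], by simp [stepSrc, stepTgt, endpt, he]⟩
    · exact ⟨[(e, false)], by simp [stepSrc, stepTgt, endpt, he]⟩
  | refl a => exact ⟨[], rfl⟩
  | symm a b _ ih =>
    obtain ⟨l, hl⟩ := ih
    exact ⟨reverseSteps l, hl.reverse⟩
  | trans a b c _ _ ih₁ ih₂ =>
    obtain ⟨l₁, h₁⟩ := ih₁
    obtain ⟨l₂, h₂⟩ := ih₂
    exact ⟨l₁ ++ l₂, h₁.append h₂⟩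

variable (Γ) in
def rep (c : Γ.Components) : V := (Quot.exists_rep c).choose

variable (Γ) in
def root (v : V) : V := Γ.rep (Γ.comp v)

lemma comp_rep (c : Γ.Components) : Γ.comp (Γ.rep c) = c := (Quot.exists_rep c).choose_spec

lemma comp_root (v : V) : Γ.comp (Γ.root v) = Γ.comp v := comp_rep _

lemma root_eq_root {u v : V} (h : Γ.comp u = Γ.comp v) : Γ.root u = Γ.root v := by
  rw [root, h, root]

lemma root_root (v : V) : Γ.root (Γ.root v) = Γ.root v := root_eq_root (comp_root v)

lemma root_rep (c : Γ.Components) : Γ.root (Γ.rep c) = Γ.rep c := by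
  rw [root, comp_rep]

lemma exists_isStepWalk_root (v : V) :
    ∃ n : ℕ, ∃ l, Γ.IsStepWalk l v (Γ.root v) ∧ l.length = n := by
  obtain ⟨l, hl⟩ := exists_isStepWalk_of_comp_eq (comp_root v).symm
  exact ⟨l.length, l, hl, rfl⟩

variable (Γ) in
def depth (v : V) : ℕ := Nat.find (exists_isStepWalk_root (Γ := Γ) v)

lemma depth_le {v : V} {l : List (E × Bool)} (hl : Γ.IsStepWalk l v (Γ.root v)) :
    Γ.depth v ≤ l.length :=
  Nat.find_le ⟨l, hl, rfl⟩

/-- Along a shortest walk to the root, the first step decreases the depth. -/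
lemma exists_parentStep {v : V} (h : v ≠ Γ.root v) :
    ∃ s : E × Bool, Γ.stepSrc s = v ∧ Γ.depth (Γ.stepTgt s) + 1 = Γ.depth v := by
  obtain ⟨l, hl, hlen⟩ := Nat.find_spec (exists_isStepWalk_root (Γ := Γ) v)
  have hne : l ≠ [] := by
    rintro rfl
    exact h hl
  obtain ⟨s, l', rfl⟩ := List.exists_cons_of_ne_nil hne
  have hrt : Γ.root (Γ.stepTgt s) = Γ.root v :=
    root_eq_root (by rw [← comp_stepSrc s, hl.1])
  have hle : Γ.depth (Γ.stepTgt s) ≤ l'.length := depth_le (hrt ▸ hl.2)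
  obtain ⟨m, hm, hmlen⟩ := Nat.find_spec (exists_isStepWalk_root (Γ := Γ) (Γ.stepTgt s))
  have hge : Γ.depth v ≤ Γ.depth (Γ.stepTgt s) + 1 := by
    have := depth_le (l := s :: m) ⟨hl.1, hrt ▸ hm⟩
    rw [List.length_cons, hmlen] at this
    exact this
  refine ⟨s, hl.1.symm, ?_⟩
  have : Γ.depth v = l'.length + 1 := hlen.symm
  omega

variable (Γ) in
def parentStep (v : V) (h : v ≠ Γ.root v) : E × Bool := (exists_parentStep h).choose

lemma stepSrc_parentStep {v : V} (h : v ≠ Γ.root v) : Γ.stepSrc (Γ.parentStep v h) = v :=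
  (exists_parentStep h).choose_spec.1

lemma depth_parentStep {v : V} (h : v ≠ Γ.root v) :
    Γ.depth (Γ.stepTgt (Γ.parentStep v h)) + 1 = Γ.depth v :=
  (exists_parentStep h).choose_spec.2

lemma root_parentStep {v : V} (h : v ≠ Γ.root v) :
    Γ.root (Γ.stepTgt (Γ.parentStep v h)) = Γ.root v :=
  root_eq_root (by rw [← comp_stepSrc, stepSrc_parentStep])

variable (Γ) in
def rootSteps (v : V) : List (E × Bool) :=
  if h : v = Γ.root v then [] else
    Γ.parentStep v h :: rootSteps (Γ.stepTgt (Γ.parentStep v h))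
termination_by Γ.depth v
decreasing_by have := depth_parentStep h; omega

lemma rootSteps_of_eq {v : V} (h : v = Γ.root v) : Γ.rootSteps v = [] := by
  rw [rootSteps, dif_pos h]

lemma rootSteps_of_ne {v : V} (h : v ≠ Γ.root v) :
    Γ.rootSteps v = Γ.parentStep v h :: Γ.rootSteps (Γ.stepTgt (Γ.parentStep v h)) := by
  rw [rootSteps, dif_neg h]

lemma isStepWalk_rootSteps (v : V) : Γ.IsStepWalk (Γ.rootSteps v) v (Γ.root v) := by
  by_cases h : v = Γ.root v
  · rw [rootSteps_of_eq h]
    exact h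
  · rw [rootSteps_of_ne h]
    have := isStepWalk_rootSteps (Γ.stepTgt (Γ.parentStep v h))
    rw [root_parentStep] at this
    exact ⟨(stepSrc_parentStep h).symm, this⟩
termination_by Γ.depth v
decreasing_by have := depth_parentStep h; omega

variable (Γ) in
/-- Switching at the vertices with `treeSign v = -1` makes every forest edge positive; the
consistent edges are those that become positive. -/
def treeSign (v : V) : ℤˣ := Γ.stepsSign (Γ.rootSteps v)

variable (Γ) in
def IsConsistent (g : E) : Prop := Γ.sign g = Γ.treeSign (Γ.ends g).1 * Γ.treeSign (Γ.ends g).2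

variable (Γ) in
def forest : Set E := {g | ∃ (v : V) (h : v ≠ Γ.root v), (Γ.parentStep v h).1 = g}

lemma treeSign_root (v : V) : Γ.treeSign (Γ.root v) = 1 := by
  rw [treeSign, rootSteps_of_eq (root_root v).symm, stepsSign_nil]

lemma IsConsistent.sign_step {s : E × Bool} (h : Γ.IsConsistent s.1) :
    Γ.sign s.1 = Γ.treeSign (Γ.stepSrc s) * Γ.treeSign (Γ.stepTgt s) := by
  rcases s with ⟨e, _ | _⟩
  · exact h.trans (mul_comm _ _)
  · exact h

lemma isConsistent_of_mem_forest {g : E} (hg : g ∈ Γ.forest) : Γ.IsConsistent g := by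
  obtain ⟨v, h, rfl⟩ := hg
  have key : Γ.treeSign (Γ.stepSrc (Γ.parentStep v h)) =
      Γ.sign (Γ.parentStep v h).1 * Γ.treeSign (Γ.stepTgt (Γ.parentStep v h)) := by
    rw [stepSrc_parentStep, treeSign, rootSteps_of_ne h, stepsSign_cons, treeSign]
  set s := Γ.parentStep v h
  have hs : Γ.sign s.1 = Γ.treeSign (Γ.stepSrc s) * Γ.treeSign (Γ.stepTgt s) := by
    rw [key, mul_assoc, Int.units_mul_self, mul_one]
  rcases s with ⟨e, _ | _⟩
  · exact hs.trans (mul_comm _ _)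
  · exact hs

lemma endpt_ne_of_mem_forest {g : E} (hg : g ∈ Γ.forest) : Γ.endpt g true ≠ Γ.endpt g false := by
  obtain ⟨v, h, rfl⟩ := hg
  intro heq
  have hst : Γ.stepSrc (Γ.parentStep v h) = Γ.stepTgt (Γ.parentStep v h) := by
    rcases hs : Γ.parentStep v h with ⟨e, _ | _⟩ <;> rw [hs] at heq
    exacts [heq.symm, heq]
  have := depth_parentStep h
  rw [← hst, stepSrc_parentStep] at this
  omega

lemma stepsSign_of_isConsistent {l : List (E × Bool)} {u v : V} (h : Γ.IsStepWalk l u v)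
    (hc : ∀ g ∈ l.map Prod.fst, Γ.IsConsistent g) :
    Γ.stepsSign l = Γ.treeSign u * Γ.treeSign v := by
  induction l generalizing u with
  | nil => rw [h, stepsSign_nil, Int.units_mul_self]
  | cons s l ih =>
    rw [stepsSign_cons, ih h.2 fun g hg => hc g (by simp [hg]),
      (hc s.1 (by simp)).sign_step, h.1, mul_assoc, ← mul_assoc (Γ.treeSign (Γ.stepTgt s)),
      Int.units_mul_self, one_mul]

lemma stepsSign_of_subset_forest {l : List (E × Bool)} {u v : V} (h : Γ.IsStepWalk l u v)
    (hF : ∀ g ∈ l.map Prod.fst, g ∈ Γ.forest) :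
    Γ.stepsSign l = Γ.treeSign u * Γ.treeSign v :=
  stepsSign_of_isConsistent h fun g hg => isConsistent_of_mem_forest (hF g hg)

lemma rootSteps_subset_forest (v : V) : ∀ g ∈ (Γ.rootSteps v).map Prod.fst, g ∈ Γ.forest := by
  by_cases h : v = Γ.root v
  · simp [rootSteps_of_eq h]
  · rw [rootSteps_of_ne h]
    rintro g (_ | ⟨_, hg⟩)
    · exact ⟨v, h, rfl⟩
    · exact rootSteps_subset_forest _ g hg
termination_by Γ.depth v
decreasing_by have := depth_parentStep h; omega

lemma exists_forest_path {u v : V} (h : Γ.comp u = Γ.comp v) :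
    ∃ p, Γ.IsPathSteps p u v ∧ ∀ g ∈ p.map Prod.fst, g ∈ Γ.forest := by
  have hw := (isStepWalk_rootSteps u).append
    ((root_eq_root h).symm ▸ (isStepWalk_rootSteps v).reverse)
  obtain ⟨p, hp, hpl⟩ := hw.exists_isPathSteps
  refine ⟨p, hp, fun g hg => ?_⟩
  rcases List.mem_append.mp (List.map_append ▸ hpl g hg) with hg | hg
  · exact rootSteps_subset_forest u g hg
  · rw [map_fst_reverseSteps, List.mem_reverse] at hg
    exact rootSteps_subset_forest v g hg

variable (Γ) in
def forestPath (u v : V) : List (E × Bool) :=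
  if h : Γ.comp u = Γ.comp v then (exists_forest_path h).choose else []

lemma isPathSteps_forestPath {u v : V} (h : Γ.comp u = Γ.comp v) :
    Γ.IsPathSteps (Γ.forestPath u v) u v := by
  rw [forestPath, dif_pos h]
  exact (exists_forest_path h).choose_spec.1

lemma forestPath_subset_forest (u v : V) :
    ∀ g ∈ (Γ.forestPath u v).map Prod.fst, g ∈ Γ.forest := by
  unfold forestPath
  split_ifs with h
  · exact (exists_forest_path h).choose_spec.2
  · simp

variable (Γ) in
def fundCycle (e : E) : List (E × Bool) := (e, true) :: Γ.forestPath (Γ.ends e).2 (Γ.ends e).1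

lemma mem_fundCycle {e g : E} (hg : g ∈ (Γ.fundCycle e).map Prod.fst) :
    g = e ∨ g ∈ Γ.forest := by
  rcases List.mem_cons.mp hg with h | h
  · exact Or.inl h
  · exact Or.inr (forestPath_subset_forest _ _ g h)

lemma count_fundCycle {e : E} (he : e ∉ Γ.forest) :
    ((Γ.fundCycle e).map Prod.fst).count e = 1 := by
  rw [fundCycle, List.map_cons, List.count_cons_self, add_eq_right, List.count_eq_zero]
  exact fun h => he (forestPath_subset_forest _ _ e h)

lemma isCycleSteps_fundCycle {e : E} (he : e ∉ Γ.forest) :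
    Γ.IsCycleSteps (Γ.fundCycle e) (Γ.ends e).1 := by
  have hp := isPathSteps_forestPath (comp_ends (Γ := Γ) e).symm
  refine ⟨⟨rfl, hp.1⟩, List.cons_ne_nil _ _, ?_, ?_⟩
  · exact List.nodup_cons.mpr ⟨hp.end_not_mem_srcs, hp.nodup_srcs⟩
  · exact List.nodup_cons.mpr
      ⟨fun h => he (forestPath_subset_forest _ _ e h), hp.nodup_edges⟩

lemma stepsSign_fundCycle (e : E) :
    Γ.stepsSign (Γ.fundCycle e) =
      Γ.sign e * (Γ.treeSign (Γ.ends e).2 * Γ.treeSign (Γ.ends e).1) := by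
  rw [fundCycle, stepsSign_cons, stepsSign_of_subset_forest
    (isPathSteps_forestPath (comp_ends e).symm).1 (forestPath_subset_forest _ _)]

lemma stepsSign_fundCycle_of_isConsistent {e : E} (h : Γ.IsConsistent e) :
    Γ.stepsSign (Γ.fundCycle e) = 1 := by
  rw [stepsSign_fundCycle, h, mul_comm (Γ.treeSign _) (Γ.treeSign _), Int.units_mul_self]

lemma stepsSign_fundCycle_of_not_isConsistent {e : E} (h : ¬ Γ.IsConsistent e) :
    Γ.stepsSign (Γ.fundCycle e) = -1 := by
  rw [stepsSign_fundCycle, Int.units_ne_iff_eq_neg.mp h, mul_comm (Γ.treeSign (Γ.ends e).2),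
    neg_mul, Int.units_mul_self]

lemma not_mem_forest_of_not_isConsistent {e : E} (h : ¬ Γ.IsConsistent e) : e ∉ Γ.forest :=
  fun he => h (isConsistent_of_mem_forest he)

lemma not_isBalancedComponent_of_not_isConsistent {e : E} (h : ¬ Γ.IsConsistent e) :
    ¬ Γ.IsBalancedComponent (Γ.comp (Γ.ends e).1) := by
  intro hbal
  have hC := isCycleSteps_fundCycle (not_mem_forest_of_not_isConsistent h)
  have := hbal _ rfl _ hC.isCycle
  rw [Walk.sgn_eq_stepsSign, steps_walkOfSteps, stepsSign_fundCycle_of_not_isConsistent h]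
    at this
  exact absurd this (by decide)

lemma exists_not_isConsistent {c : Γ.Components} (hc : ¬ Γ.IsBalancedComponent c) :
    ∃ e : E, Γ.comp (Γ.ends e).1 = c ∧ ¬ Γ.IsConsistent e := by
  by_contra! h
  refine hc fun v hv W _ => ?_
  rw [Walk.sgn_eq_stepsSign, stepsSign_of_isConsistent W.isStepWalk_steps, Int.units_mul_self]
  intro g hg
  obtain ⟨s, hs, rfl⟩ := List.exists_of_mem_map hg
  refine h s.1 ?_
  rw [← hv, ← W.isStepWalk_steps.comp_eq_of_mem (List.mem_map_of_mem hs)]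
  rcases s with ⟨e, _ | _⟩
  · exact comp_ends e
  · rfl

variable (Γ) in
def unbalancingEdge (c : Γ.Components) (hc : ¬ Γ.IsBalancedComponent c) : E :=
  (exists_not_isConsistent hc).choose

lemma comp_unbalancingEdge {c : Γ.Components} (hc : ¬ Γ.IsBalancedComponent c) :
    Γ.comp (Γ.ends (Γ.unbalancingEdge c hc)).1 = c :=
  (exists_not_isConsistent hc).choose_spec.1

lemma not_isConsistent_unbalancingEdge {c : Γ.Components} (hc : ¬ Γ.IsBalancedComponent c) :
    ¬ Γ.IsConsistent (Γ.unbalancingEdge c hc) :=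
  (exists_not_isConsistent hc).choose_spec.2

lemma not_mem_forest_of_endpt_eq {g : E} {x : V} (h : ∀ b, Γ.endpt g b = x) :
    g ∉ Γ.forest :=
  fun hg => endpt_ne_of_mem_forest hg ((h true).trans (h false).symm)

lemma mem_fundCycle_srcs_iff {e : E} {z : V} :
    z ∈ (Γ.fundCycle e).map Γ.stepSrc ↔
      z ∈ (Γ.forestPath (Γ.ends e).2 (Γ.ends e).1).map Γ.stepSrc ++ [(Γ.ends e).1] := by
  have hsrc : Γ.stepSrc (e, true) = (Γ.ends e).1 := rfl
  simp only [fundCycle, List.map_cons, List.mem_cons, List.mem_append, hsrc]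
  tauto

/-! ## Fundamental circuits -/

variable (Γ) in
def HasCircuitThrough (B : Set E) (e : E) : Prop :=
  ∃ l x, Γ.IsCircuitSteps l x ∧ (l.map Prod.fst).count e = 1 ∧
    ∀ g ∈ l.map Prod.fst, g ≠ e → g ∈ B

lemma IsTension.eq_zero_of_hasCircuitThrough {G : Type*} [AddCommGroup G]
    {ω : E → Bool → ℤˣ} {f : E → G} (hf : Γ.IsTension ω f) {B : Set E} {e : E}
    (h : Γ.HasCircuitThrough B e) (hB : ∀ g ∈ B, f g = 0) : f e = 0 := by
  obtain ⟨l, x, hl, hcount, hsub⟩ := h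
  exact hf.eq_zero_of_isCircuitSteps hl hcount fun g hg hne => hB g (hsub g hg hne)

lemma IsCycleSteps.hasCircuitThrough {l : List (E × Bool)} {x : V} (h : Γ.IsCycleSteps l x)
    (hs : Γ.stepsSign l = 1) {e : E} {B : Set E} (hcount : (l.map Prod.fst).count e = 1)
    (hB : ∀ g ∈ l.map Prod.fst, g ≠ e → g ∈ B) : Γ.HasCircuitThrough B e :=
  ⟨l, x, h.isCircuitSteps hs, hcount, hB⟩

lemma hasCircuitThrough_of_tight {e : E} {l₁ l₂ : List (E × Bool)} {v₁ v₂ x : V}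
    (h₁ : Γ.IsCycleSteps l₁ v₁) (hs₁ : Γ.stepsSign l₁ = -1)
    (h₂ : Γ.IsCycleSteps l₂ v₂) (hs₂ : Γ.stepsSign l₂ = -1)
    (hx₁ : x ∈ l₁.map Γ.stepSrc) (hx₂ : x ∈ l₂.map Γ.stepSrc)
    (hshare : ∀ z ∈ l₁.map Γ.stepSrc, z ∈ l₂.map Γ.stepSrc → z = x)
    (hcount : (l₁.map Prod.fst).count e = 1) (he₂ : e ∉ l₂.map Prod.fst)
    (hF : ∀ g ∈ l₁.map Prod.fst, g ≠ e → g ∈ Γ.forest) :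
    Γ.HasCircuitThrough {g | g ∈ Γ.forest ∨ g ∈ l₂.map Prod.fst} e := by
  obtain ⟨r₁, hr₁, hp₁⟩ := h₁.rotate hx₁
  obtain ⟨r₂, hr₂, hp₂⟩ := h₂.rotate hx₂
  have hE₁ := hp₁.map Prod.fst
  have hE₂ := hp₂.map Prod.fst
  refine ⟨r₁ ++ r₂, x, isCircuitSteps_tight hr₁ (by rwa [stepsSign_perm hp₁])
    hr₂ (by rwa [stepsSign_perm hp₂])
    (fun z hz hz' => hshare z ((hp₁.map _).mem_iff.mp hz) ((hp₂.map _).mem_iff.mp hz'))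
    (fun g hg hg' => ?_), ?_, fun g hg hne => ?_⟩
  · rw [hE₁.mem_iff] at hg
    rw [hE₂.mem_iff] at hg'
    refine not_mem_forest_of_endpt_eq (x := x) (fun b => hshare _ (h₁.endpt_mem hg b)
      (h₂.endpt_mem hg' b)) (hF g hg ?_)
    rintro rfl
    exact he₂ hg'
  · rw [List.map_append, List.count_append, hE₁.count_eq, hE₂.count_eq, hcount,
      List.count_eq_zero.mpr he₂]
  · rw [List.map_append, List.mem_append, hE₁.mem_iff, hE₂.mem_iff] at hg
    rcases hg with hg | hg
    · exact Or.inl (hF g hg hne)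
    · exact Or.inr hg

lemma hasCircuitThrough_of_loose {e : E} {l₁ l₂ P : List (E × Bool)} {v₁ v₂ x₁ x₂ : V}
    (h₁ : Γ.IsCycleSteps l₁ v₁) (hs₁ : Γ.stepsSign l₁ = -1)
    (h₂ : Γ.IsCycleSteps l₂ v₂) (hs₂ : Γ.stepsSign l₂ = -1)
    (hx₁ : x₁ ∈ l₁.map Γ.stepSrc) (hx₂ : x₂ ∈ l₂.map Γ.stepSrc)
    (hdisj : ∀ z ∈ l₁.map Γ.stepSrc, z ∉ l₂.map Γ.stepSrc)
    (hP : Γ.IsPathSteps P x₁ x₂) (hPF : ∀ g ∈ P.map Prod.fst, g ∈ Γ.forest)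
    (hP₁ : ∀ z ∈ P.map Γ.stepSrc ++ [x₂], z ∈ l₁.map Γ.stepSrc → z = x₁)
    (hP₂ : ∀ z ∈ P.map Γ.stepSrc ++ [x₂], z ∈ l₂.map Γ.stepSrc → z = x₂)
    (hcount : (l₁.map Prod.fst).count e = 1) (he₂ : e ∉ l₂.map Prod.fst)
    (hF : ∀ g ∈ l₁.map Prod.fst, g ≠ e → g ∈ Γ.forest) (he : e ∉ Γ.forest) :
    Γ.HasCircuitThrough {g | g ∈ Γ.forest ∨ g ∈ l₂.map Prod.fst} e := by
  obtain ⟨r₁, hr₁, hp₁⟩ := h₁.rotate hx₁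
  obtain ⟨r₂, hr₂, hp₂⟩ := h₂.rotate hx₂
  have hE₁ := hp₁.map Prod.fst
  have hE₂ := hp₂.map Prod.fst
  have hS₁ := fun z => (hp₁.map Γ.stepSrc).mem_iff (a := z)
  have hS₂ := fun z => (hp₂.map Γ.stepSrc).mem_iff (a := z)
  have hePF : e ∉ P.map Prod.fst := fun h => he (hPF e h)
  refine ⟨_, x₁, isCircuitSteps_loose hr₁ (by rwa [stepsSign_perm hp₁]) hP
    hr₂ (by rwa [stepsSign_perm hp₂]) (fun z hz hz' => hdisj z ((hS₁ z).mp hz) ((hS₂ z).mp hz'))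
    (fun z hz hz' => hP₁ z hz ((hS₁ z).mp hz')) (fun z hz hz' => hP₂ z hz ((hS₂ z).mp hz'))
    (fun g hg => ⟨fun hg' => ?_, fun hg' => ?_⟩), ?_, fun g hg hne => ?_⟩
  · rw [hE₁.mem_iff] at hg'
    exact not_mem_forest_of_endpt_eq (x := x₁)
      (fun b => hP₁ _ (hP.1.endpt_mem hg b) (h₁.endpt_mem hg' b)) (hPF g hg)
  · rw [hE₂.mem_iff] at hg'
    exact not_mem_forest_of_endpt_eq (x := x₂)
      (fun b => hP₂ _ (hP.1.endpt_mem hg b) (h₂.endpt_mem hg' b)) (hPF g hg)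
  · simp only [List.map_append, List.count_append, map_fst_reverseSteps, List.count_reverse,
      hE₁.count_eq, hE₂.count_eq, hcount, List.count_eq_zero.mpr he₂,
      List.count_eq_zero.mpr hePF]
  · simp only [List.map_append, List.mem_append, map_fst_reverseSteps, List.mem_reverse,
      hE₁.mem_iff, hE₂.mem_iff] at hg
    rcases hg with hg | hg | hg | hg
    · exact Or.inl (hF g hg hne)
    · exact Or.inl (hPF g hg)
    · exact Or.inr hg
    · exact Or.inl (hPF g hg)

lemma exists_connecting_path (S₁ S₂ : V → Prop) {x y : V} (hx : S₁ x) (hy : S₂ y)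
    (hxy : Γ.comp x = Γ.comp y) :
    ∃ P x₁ x₂, S₁ x₁ ∧ S₂ x₂ ∧ Γ.IsPathSteps P x₁ x₂ ∧ (∀ g ∈ P.map Prod.fst, g ∈ Γ.forest) ∧
      (∀ z ∈ P.map Γ.stepSrc ++ [x₂], S₁ z → z = x₁) ∧
      (∀ z ∈ P.map Γ.stepSrc ++ [x₂], S₂ z → z = x₂) := by
  have hK := isPathSteps_forestPath hxy
  obtain ⟨K₁, K₂, x₂, hK₁₂, hK₁, hK₂, hx₂, hK₁S₂⟩ :=
    hK.1.exists_firstHit S₂ ⟨y, List.mem_append_right _ (List.mem_singleton_self y), hy⟩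
  obtain ⟨P₀, P, x₁, hP₀P, hP₀, hP, hx₁, hPS₁⟩ := hK₁.exists_lastHit S₁ ⟨x, hK₁.start_mem, hx⟩
  have hPK₁ : ∀ g ∈ P.map Prod.fst, g ∈ (Γ.forestPath x y).map Prod.fst := by
    intro g hg
    simp [hK₁₂, hP₀P, hg]
  have hPpath : Γ.IsPathSteps P x₁ x₂ := by
    have := (hK₁₂ ▸ hK).left hK₁ hK₂
    rw [hP₀P] at this
    exact this.right hP
  refine ⟨P, x₁, x₂, hx₁, hx₂, hPpath,
    fun g hg => forestPath_subset_forest x y g (hPK₁ g hg), fun z hz hz₁ => ?_,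
    fun z hz hz₂ => ?_⟩
  · rw [hP.srcs_append_eq] at hz
    rcases List.mem_cons.mp hz with rfl | hz
    · rfl
    · exact absurd hz₁ (hPS₁ z hz)
  · rcases List.mem_append.mp hz with hz | hz
    · exact absurd hz₂ (hK₁S₂ z (by simp [hP₀P, hz]))
    · exact List.mem_singleton.mp hz

lemma isCycleSteps_of_replace_middle {e : E} (he : e ∉ Γ.forest) {L₁ M R A : List (E × Bool)}
    {p q : V} (S : V → Prop) (hL : Γ.forestPath (Γ.ends e).2 (Γ.ends e).1 = L₁ ++ (M ++ R))
    (hL₁ : Γ.IsStepWalk L₁ (Γ.ends e).2 p) (hR : Γ.IsStepWalk R q (Γ.ends e).1)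
    (hA : Γ.IsPathSteps A p q) (hAS : ∀ z ∈ A.map Γ.stepSrc ++ [q], S z)
    (heA : e ∉ A.map Prod.fst) (hL₁S : ∀ z ∈ L₁.map Γ.stepSrc, ¬ S z)
    (hRS : ∀ z ∈ R.map Γ.stepSrc ++ [(Γ.ends e).1], S z → z = q) :
    Γ.IsCycleSteps ((e, true) :: (L₁ ++ (A ++ R))) (Γ.ends e).1 := by
  have hLp := isPathSteps_forestPath (comp_ends (Γ := Γ) e).symm
  have hLF := forestPath_subset_forest (Γ := Γ) (Γ.ends e).2 (Γ.ends e).1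
  rw [hL] at hLp hLF
  have hL₁F : ∀ g ∈ L₁.map Prod.fst, g ∈ Γ.forest := fun g hg => hLF g (by simp [hg])
  have hRF : ∀ g ∈ R.map Prod.fst, g ∈ Γ.forest := fun g hg => hLF g (by simp [hg])
  refine ⟨⟨rfl, hL₁.append (hA.1.append hR)⟩, List.cons_ne_nil _ _, ?_, ?_⟩
  · have hX : (L₁.map Γ.stepSrc ++ (R.map Γ.stepSrc ++ [(Γ.ends e).1])).Nodup :=
      hLp.2.sublist (by simp)
    have hsrc : Γ.stepSrc (e, true) = (Γ.ends e).1 := rfl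
    refine (List.perm_iff_count.mpr fun z => ?_).nodup_iff.mpr
      (List.nodup_append.mpr ⟨hX, hA.nodup_srcs, fun z hz y hy hzy => ?_⟩)
    · simp only [List.map_cons, List.map_append, List.count_cons, List.count_append,
        List.count_nil, hsrc]
      omega
    · subst hzy
      have hSz := hAS z (List.mem_append_left _ hy)
      rcases List.mem_append.mp hz with hz | hz
      · exact hL₁S z hz hSz
      · exact hA.end_not_mem_srcs (hRS z hz hSz ▸ hy)
  · have hX : (L₁.map Prod.fst ++ R.map Prod.fst).Nodup := hLp.nodup_edges.sublist (by simp)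
    have hL₁S' : ∀ z ∈ L₁.map Γ.stepSrc ++ [p], S z → z = p := by
      intro z hz hSz
      rcases List.mem_append.mp hz with hz | hz
      exacts [absurd hSz (hL₁S z hz), List.mem_singleton.mp hz]
    rw [List.map_cons, List.nodup_cons]
    refine ⟨fun h => ?_, (List.perm_iff_count.mpr fun g => ?_).nodup_iff.mpr
      (List.nodup_append.mpr ⟨hX, hA.nodup_edges, fun g hg g' hg' hgg => ?_⟩)⟩
    · simp only [List.map_append, List.mem_append] at h
      rcases h with h | h | h
      exacts [he (hL₁F e h), heA h, he (hRF e h)]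
    · simp only [List.map_append, List.count_append]
      omega
    · subst hgg
      rcases List.mem_append.mp hg with hg | hg
      · exact not_mem_forest_of_endpt_eq (x := p)
          (fun b => hL₁S' _ (hL₁.endpt_mem hg b) (hAS _ (hA.1.endpt_mem hg' b))) (hL₁F g hg)
      · exact not_mem_forest_of_endpt_eq (x := q)
          (fun b => hRS _ (hR.endpt_mem hg b) (hAS _ (hA.1.endpt_mem hg' b))) (hRF g hg)

/-- `L₁ ++ M ++ R` is the forest path of the fundamental cycle of `e`, and `p`, `q` are its
first and last vertices on the cycle `r`. Then `e`, `L₁`, the arc of `r` from `p` to `q` of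
suitable sign and `R` form a balanced cycle. -/
lemma hasCircuitThrough_of_theta {e : E} (he : ¬ Γ.IsConsistent e)
    {r L₁ M R : List (E × Bool)} {v p q : V}
    (hr : Γ.IsCycleSteps r v) (hrs : Γ.stepsSign r = -1) (her : e ∉ r.map Prod.fst)
    (hL : Γ.forestPath (Γ.ends e).2 (Γ.ends e).1 = L₁ ++ (M ++ R))
    (hL₁ : Γ.IsStepWalk L₁ (Γ.ends e).2 p) (hR : Γ.IsStepWalk R q (Γ.ends e).1)
    (hp : p ∈ r.map Γ.stepSrc) (hq : q ∈ r.map Γ.stepSrc) (hpq : p ≠ q)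
    (hL₁r : ∀ z ∈ L₁.map Γ.stepSrc, z ∉ r.map Γ.stepSrc)
    (hRr : ∀ z ∈ R.map Γ.stepTgt, z ∉ r.map Γ.stepSrc) :
    Γ.HasCircuitThrough {g | g ∈ Γ.forest ∨ g ∈ r.map Prod.fst} e := by
  have hLF := forestPath_subset_forest (Γ := Γ) (Γ.ends e).2 (Γ.ends e).1
  rw [hL] at hLF
  have hL₁F : ∀ g ∈ L₁.map Prod.fst, g ∈ Γ.forest := fun g hg => hLF g (by simp [hg])
  have hRF : ∀ g ∈ R.map Prod.fst, g ∈ Γ.forest := fun g hg => hLF g (by simp [hg])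
  have heF := not_mem_forest_of_not_isConsistent he
  obtain ⟨r', hr', hperm⟩ := hr.rotate hp
  obtain ⟨A, hA, hAr, hAE, hAs⟩ := hr'.exists_arc ((hperm.map _).mem_iff.mpr hq) hpq
    (Γ.treeSign p * Γ.treeSign q) (by rwa [stepsSign_perm hperm])
  replace hAr : ∀ z ∈ A.map Γ.stepSrc ++ [q], z ∈ r.map Γ.stepSrc :=
    fun z hz => (hperm.map _).mem_iff.mp (hAr z hz)
  replace hAE : ∀ g ∈ A.map Prod.fst, g ∈ r.map Prod.fst :=
    fun g hg => (hperm.map _).mem_iff.mp (hAE g hg)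
  have hRS : ∀ z ∈ R.map Γ.stepSrc ++ [(Γ.ends e).1], z ∈ r.map Γ.stepSrc → z = q := by
    intro z hz hzr
    rcases List.mem_cons.mp (hR.srcs_append_eq ▸ hz) with hz | hz
    exacts [hz, absurd hzr (hRr z hz)]
  refine (isCycleSteps_of_replace_middle heF (· ∈ r.map Γ.stepSrc) hL hL₁ hR hA hAr
    (fun h => her (hAE e h)) hL₁r hRS).hasCircuitThrough ?_ ?_ ?_
  · rw [stepsSign_cons, stepsSign_append, stepsSign_append, stepsSign_of_subset_forest hL₁ hL₁F,
      stepsSign_of_subset_forest hR hRF, hAs, Int.units_ne_iff_eq_neg.mp he]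
    rcases Int.units_eq_one_or (Γ.treeSign (Γ.ends e).1) with h1 | h1 <;>
      rcases Int.units_eq_one_or (Γ.treeSign (Γ.ends e).2) with h2 | h2 <;>
        rcases Int.units_eq_one_or (Γ.treeSign p) with h3 | h3 <;>
          rcases Int.units_eq_one_or (Γ.treeSign q) with h4 | h4 <;>
            simp [h1, h2, h3, h4]
  · have he' : e ∉ (L₁ ++ (A ++ R)).map Prod.fst := by
      simp only [List.map_append, List.mem_append, not_or]
      exact ⟨fun h => heF (hL₁F e h), fun h => her (hAE e h), fun h => heF (hRF e h)⟩
    rw [List.map_cons, List.count_cons_self, List.count_eq_zero.mpr he']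
  · intro g hg hne
    simp only [List.map_cons, List.map_append, List.mem_cons, List.mem_append] at hg
    rcases hg with rfl | hg | hg | hg
    · exact absurd rfl hne
    · exact Or.inl (hL₁F g hg)
    · exact Or.inr (hAE g hg)
    · exact Or.inl (hRF g hg)

/-- According to how the fundamental cycle of `e` meets `r`, the two form a loose handcuff, a
tight handcuff, or a theta graph containing a balanced cycle through `e`. -/
lemma hasCircuitThrough_of_not_isConsistent {e : E} (he : ¬ Γ.IsConsistent e)
    {r : List (E × Bool)} {v : V} (hr : Γ.IsCycleSteps r v) (hrs : Γ.stepsSign r = -1)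
    (her : e ∉ r.map Prod.fst) (hcomp : Γ.comp (Γ.ends e).1 = Γ.comp v) :
    Γ.HasCircuitThrough {g | g ∈ Γ.forest ∨ g ∈ r.map Prod.fst} e := by
  have heF := not_mem_forest_of_not_isConsistent he
  have hC := isCycleSteps_fundCycle heF
  have hCs := stepsSign_fundCycle_of_not_isConsistent he
  have hCF : ∀ g ∈ (Γ.fundCycle e).map Prod.fst, g ≠ e → g ∈ Γ.forest :=
    fun g hg hne => (mem_fundCycle hg).resolve_left hne
  have hLp := isPathSteps_forestPath (comp_ends (Γ := Γ) e).symm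
  by_cases hmeet : ∃ z ∈ (Γ.forestPath (Γ.ends e).2 (Γ.ends e).1).map Γ.stepSrc ++
      [(Γ.ends e).1], z ∈ r.map Γ.stepSrc
  · obtain ⟨L₁, L', p, hL, hL₁, hL', hp, hL₁r⟩ := hLp.1.exists_firstHit _ hmeet
    obtain ⟨M, R, q, rfl, hM, hR, hq, hRr⟩ := hL'.exists_lastHit (· ∈ r.map Γ.stepSrc)
      ⟨p, hL'.start_mem, hp⟩
    by_cases hpq : p = q
    · subst hpq
      have hMnil := (hL ▸ hLp).eq_nil_of_closed hM hR
      subst hMnil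
      refine hasCircuitThrough_of_tight hC hCs hr hrs
        (mem_fundCycle_srcs_iff.mpr (by simp [hL, hR.start_mem])) hp (fun z hz hzr => ?_)
        (count_fundCycle heF) her hCF
      rw [mem_fundCycle_srcs_iff, hL, List.nil_append, List.map_append, List.append_assoc,
        List.mem_append, hR.srcs_append_eq, List.mem_cons] at hz
      rcases hz with hz | hz | hz
      exacts [absurd hzr (hL₁r z hz), hz, absurd hzr (hRr z hz)]
    · exact hasCircuitThrough_of_theta he hr hrs her hL hL₁ hR hp hq hpq hL₁r hRr
  · push Not at hmeet
    obtain ⟨P, x₁, x₂, hx₁, hx₂, hP, hPF, hP₁, hP₂⟩ :=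
      exists_connecting_path (· ∈ (Γ.fundCycle e).map Γ.stepSrc) (· ∈ r.map Γ.stepSrc)
        (hC.1.head_mem hC.2.1) (hr.1.head_mem hr.2.1) hcomp
    exact hasCircuitThrough_of_loose hC hCs hr hrs hx₁ hx₂
      (fun z hz => hmeet z (mem_fundCycle_srcs_iff.mp hz)) hP hPF hP₁ hP₂ (count_fundCycle heF)
      her hCF heF

lemma IsTension.eq_zero_of_forest {G : Type*} [AddCommGroup G] {ω : E → Bool → ℤˣ}
    {f : E → G} (hf : Γ.IsTension ω f) (hF : ∀ g ∈ Γ.forest, f g = 0)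
    (hU : ∀ c (hc : ¬ Γ.IsBalancedComponent c), f (Γ.unbalancingEdge c hc) = 0) (e : E) :
    f e = 0 := by
  by_cases heF : e ∈ Γ.forest
  · exact hF e heF
  by_cases he : Γ.IsConsistent e
  · exact hf.eq_zero_of_hasCircuitThrough ((isCycleSteps_fundCycle heF).hasCircuitThrough
      (stepsSign_fundCycle_of_isConsistent he) (count_fundCycle heF)
      fun g hg hne => (mem_fundCycle hg).resolve_left hne) hF
  have hc := not_isBalancedComponent_of_not_isConsistent he
  by_cases hee' : e = Γ.unbalancingEdge _ hc
  · exact hee' ▸ hU _ hc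
  have he' := not_isConsistent_unbalancingEdge hc
  refine hf.eq_zero_of_hasCircuitThrough (hasCircuitThrough_of_not_isConsistent he
    (isCycleSteps_fundCycle (not_mem_forest_of_not_isConsistent he'))
    (stepsSign_fundCycle_of_not_isConsistent he') (fun h => ?_)
    (comp_unbalancingEdge hc).symm) ?_
  · rcases mem_fundCycle h with h | h
    exacts [hee' h, heF h]
  · rintro g (hg | hg)
    · exact hF g hg
    · rcases mem_fundCycle hg with rfl | hg
      exacts [hU _ hc, hF g hg]

/-! ## Potentials on the double cover -/

section CoverPotential

variable {G : Type*} [AddCommGroup G]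

variable (Γ) in
def coverPotential (ψ : V → G) (κ : Γ.Components → G) (v : V) (ε : ℤˣ) : G :=
  if ε = Γ.treeSign v then ψ v else κ (Γ.comp v) - ψ v

variable (Γ) in
def tensionOf (ω : E → Bool → ℤˣ) (ψ : V → G) (κ : Γ.Components → G) (e : E) : G :=
  (ω e true : ℤ) • (Γ.coverPotential ψ κ (Γ.ends e).2 (Γ.sign e) -
    Γ.coverPotential ψ κ (Γ.ends e).1 1)

variable {ψ : V → G} {κ : Γ.Components → G} {ω : E → Bool → ℤˣ}

lemma coverPotential_neg (v : V) (ε : ℤˣ) :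
    Γ.coverPotential ψ κ v (-ε) = κ (Γ.comp v) - Γ.coverPotential ψ κ v ε := by
  unfold coverPotential
  rcases Int.units_eq_one_or ε with rfl | rfl <;>
    rcases Int.units_eq_one_or (Γ.treeSign v) with h | h <;> simp [h]

lemma coverPotential_ends (e : E) (ε : ℤˣ) :
    Γ.coverPotential ψ κ (Γ.ends e).2 (ε * Γ.sign e) =
      Γ.coverPotential ψ κ (Γ.ends e).1 ε + ((ε * ω e true : ℤˣ) : ℤ) • Γ.tensionOf ω ψ κ e := by
  have h₁ : Γ.coverPotential ψ κ (Γ.ends e).2 (Γ.sign e) =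
      Γ.coverPotential ψ κ (Γ.ends e).1 1 + (ω e true : ℤ) • Γ.tensionOf ω ψ κ e := by
    rw [tensionOf, units_smul_smul]
    abel
  rcases Int.units_eq_one_or ε with rfl | rfl
  · rw [one_mul, one_mul, h₁]
  · rw [neg_one_mul, neg_one_mul, coverPotential_neg, coverPotential_neg, h₁, comp_ends,
      Units.val_neg, neg_smul]
    abel

lemma coverPotential_step (hω : Γ.IsCompatible ω) (s : E × Bool) (ε : ℤˣ) :
    Γ.coverPotential ψ κ (Γ.stepTgt s) (ε * Γ.sign s.1) =
      Γ.coverPotential ψ κ (Γ.stepSrc s) ε + ((ε * ω s.1 s.2 : ℤˣ) : ℤ) •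
        Γ.tensionOf ω ψ κ s.1 := by
  rcases s with ⟨e, _ | _⟩
  · have h := coverPotential_ends (ψ := ψ) (κ := κ) (ω := ω) e (ε * Γ.sign e)
    rw [mul_assoc, Int.units_mul_self, mul_one] at h
    have hf : ω e false = -(Γ.sign e * ω e true) := hω.apply_not e true
    change Γ.coverPotential ψ κ (Γ.ends e).1 (ε * Γ.sign e) =
      Γ.coverPotential ψ κ (Γ.ends e).2 ε + ((ε * ω e false : ℤˣ) : ℤ) • Γ.tensionOf ω ψ κ e
    rw [h, hf]
    simp only [Units.val_mul, Units.val_neg, mul_neg, neg_smul, ← mul_assoc]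
    abel
  · exact coverPotential_ends e ε

lemma coverPotential_of_isStepWalk (hω : Γ.IsCompatible ω) {l : List (E × Bool)} {u v : V}
    (h : Γ.IsStepWalk l u v) (ε : ℤˣ) :
    Γ.coverPotential ψ κ v (ε * Γ.stepsSign l) =
      Γ.coverPotential ψ κ u ε + (ε : ℤ) • Γ.stepsTension ω (Γ.tensionOf ω ψ κ) l := by
  induction l generalizing u ε with
  | nil => rw [h, stepsSign_nil, mul_one, stepsTension_nil, smul_zero, add_zero]
  | cons s l ih =>
    rw [stepsSign_cons, stepsTension_cons, ← mul_assoc, ih h.2, coverPotential_step hω, h.1,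
      smul_add, Units.val_mul, Units.val_mul, mul_smul, mul_smul, add_assoc]

lemma isTension_tensionOf (hω : Γ.IsCompatible ω) : Γ.IsTension ω (Γ.tensionOf ω ψ κ) := by
  intro v W hW
  have h := coverPotential_of_isStepWalk (ψ := ψ) (κ := κ) hω W.isStepWalk_steps 1
  rw [hW.stepsSign_steps, mul_one, Units.val_one, one_smul, left_eq_add] at h
  rw [Walk.tensionSum_eq_stepsTension, h]

/-- Around an unbalanced cycle at `v` the tension sum is `κ - 2 φ(v, 1)`, where `φ` is the cover
potential, and it agrees with the edge sum modulo `2G`. -/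
lemma edgeSum_tensionOf_mem (hω : Γ.IsCompatible ω) {H : AddSubgroup G} (hH : twoG G ≤ H)
    (hκ : ∀ c, κ c ∈ H) {v : V} {W : Γ.Walk v v} (hW : Γ.IsUnbalancedCycle W) :
    W.edgeSum (Γ.tensionOf ω ψ κ) ∈ H := by
  have h := coverPotential_of_isStepWalk (ψ := ψ) (κ := κ) hω W.isStepWalk_steps 1
  rw [← W.sgn_eq_stepsSign, hW.2, one_mul, Units.val_one, one_smul, coverPotential_neg] at h
  have hts : Γ.stepsTension ω (Γ.tensionOf ω ψ κ) W.steps =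
      κ (Γ.comp v) - doubleHom G (Γ.coverPotential ψ κ v 1) := by
    rw [doubleHom, AddMonoidHom.mk'_apply]
    rw [← sub_eq_iff_eq_add'] at h
    rw [← h]
    abel
  have hmem := stepsTension_sub_sum_mem_twoG (Γ := Γ) ω (Γ.tensionOf ω ψ κ) W.steps
  rw [Walk.edgeSum_eq, ← sub_sub_self (Γ.stepsTension ω _ W.steps) (List.sum _)]
  refine sub_mem ?_ (hH hmem)
  rw [hts]
  exact sub_mem (hκ _) (hH ⟨_, rfl⟩)

lemma coverPotential_root (hψ : ∀ v, ψ (Γ.root v) = 0) (v : V) :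
    Γ.coverPotential ψ κ (Γ.root v) 1 = 0 := by
  rw [coverPotential, if_pos (treeSign_root v).symm, hψ]

lemma psi_eq_stepsTension_tensionOf (hω : Γ.IsCompatible ω) (hψ : ∀ v, ψ (Γ.root v) = 0) (v : V) :
    ψ v = Γ.stepsTension ω (Γ.tensionOf ω ψ κ) (reverseSteps (Γ.rootSteps v)) := by
  have h := coverPotential_of_isStepWalk (ψ := ψ) (κ := κ) hω (isStepWalk_rootSteps v).reverse 1
  rwa [one_mul, Units.val_one, one_smul, stepsSign_reverseSteps, coverPotential_root hψ,
    zero_add, ← treeSign, coverPotential, if_pos rfl] at h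

lemma kappa_eq_stepsTension_tensionOf (hω : Γ.IsCompatible ω) (hψ : ∀ v, ψ (Γ.root v) = 0)
    {l : List (E × Bool)} {v : V} (hl : Γ.IsStepWalk l (Γ.root v) (Γ.root v))
    (hs : Γ.stepsSign l = -1) :
    κ (Γ.comp v) = Γ.stepsTension ω (Γ.tensionOf ω ψ κ) l := by
  have h := coverPotential_of_isStepWalk (ψ := ψ) (κ := κ) hω hl 1
  rwa [hs, one_mul, Units.val_one, one_smul, coverPotential_neg, coverPotential_root hψ,
    sub_zero, zero_add, comp_root] at h

end CoverPotential

/-! ## Counting -/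

lemma card_subtype_add_card_subtype_not {α : Type*} [Finite α] (p : α → Prop) :
    Nat.card {a // p a} + Nat.card {a // ¬ p a} = Nat.card α := by
  rw [← Nat.card_sum, Nat.card_congr (Equiv.sumCompl p)]

variable (Γ) in
def rootsEquivComponents : {v : V // v = Γ.root v} ≃ Γ.Components where
  toFun v := Γ.comp v.1
  invFun c := ⟨Γ.rep c, (root_rep c).symm⟩
  left_inv v := Subtype.ext v.2.symm
  right_inv c := comp_rep c

section Params

variable {G : Type*} [AddCommGroup G] {ω : E → Bool → ℤˣ}

variable (Γ) in
abbrev Params (H : AddSubgroup G) : Type _ :=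
  ({v : V // v ≠ Γ.root v} → G) × ({c : Γ.Components // ¬ Γ.IsBalancedComponent c} → H)

variable (Γ) in
def paramPotential {H : AddSubgroup G} (x : Γ.Params H) (v : V) : G :=
  if h : v = Γ.root v then 0 else x.1 ⟨v, h⟩

variable (Γ) in
def paramKappa {H : AddSubgroup G} (x : Γ.Params H) (c : Γ.Components) : G :=
  if h : Γ.IsBalancedComponent c then 0 else x.2 ⟨c, h⟩

lemma paramPotential_root {H : AddSubgroup G} (x : Γ.Params H) (v : V) :
    Γ.paramPotential x (Γ.root v) = 0 :=
  dif_pos (root_root v).symm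

lemma paramKappa_mem {H : AddSubgroup G} (x : Γ.Params H) (c : Γ.Components) :
    Γ.paramKappa x c ∈ H := by
  unfold paramKappa
  split_ifs
  exacts [zero_mem H, SetLike.coe_mem _]

lemma tensionOf_params_injective (hω : Γ.IsCompatible ω) (H : AddSubgroup G) :
    Function.Injective fun x : Γ.Params H =>
      Γ.tensionOf ω (Γ.paramPotential x) (Γ.paramKappa x) := by
  intro x y hxy
  simp only at hxy
  ext v
  · have hx := psi_eq_stepsTension_tensionOf (κ := Γ.paramKappa x) hω (paramPotential_root x) v
    have hy := psi_eq_stepsTension_tensionOf (κ := Γ.paramKappa y) hω (paramPotential_root y) v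
    rw [paramPotential, dif_neg v.2] at hx hy
    rw [hx, hy, hxy]
  · obtain ⟨c, hc⟩ := v
    set a := (Γ.ends (Γ.unbalancingEdge c hc)).1
    have he := not_isConsistent_unbalancingEdge hc
    have hl : Γ.IsStepWalk (reverseSteps (Γ.rootSteps a) ++
        (Γ.fundCycle (Γ.unbalancingEdge c hc) ++ Γ.rootSteps a)) (Γ.root a) (Γ.root a) :=
      (isStepWalk_rootSteps a).reverse.append
        ((isCycleSteps_fundCycle (not_mem_forest_of_not_isConsistent he)).1.append
          (isStepWalk_rootSteps a))
    have hs : Γ.stepsSign (reverseSteps (Γ.rootSteps a) ++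
        (Γ.fundCycle (Γ.unbalancingEdge c hc) ++ Γ.rootSteps a)) = -1 := by
      rw [stepsSign_append, stepsSign_append, stepsSign_reverseSteps,
        stepsSign_fundCycle_of_not_isConsistent he, neg_one_mul, mul_neg,
        Int.units_mul_self]
    have hx := kappa_eq_stepsTension_tensionOf hω (paramPotential_root x) (κ := Γ.paramKappa x)
      hl hs
    have hy := kappa_eq_stepsTension_tensionOf hω (paramPotential_root y) (κ := Γ.paramKappa y)
      hl hs
    rw [comp_unbalancingEdge, paramKappa, dif_neg hc] at hx hy
    rw [hx, hy, hxy]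

lemma sum_fundCycle (f : E → G) (e : E) :
    ((Γ.fundCycle e).map fun s => f s.1).sum =
      f e + ((Γ.forestPath (Γ.ends e).2 (Γ.ends e).1).map fun s => f s.1).sum := by
  rw [fundCycle, List.map_cons, List.sum_cons]

lemma sum_fundCycle_unbalancingEdge_mem {H : AddSubgroup G} {f : E → G}
    (hf : ∀ (v : V) (W : Γ.Walk v v), Γ.IsUnbalancedCycle W → W.edgeSum f ∈ H)
    {c : Γ.Components} (hc : ¬ Γ.IsBalancedComponent c) :
    ((Γ.fundCycle (Γ.unbalancingEdge c hc)).map fun s => f s.1).sum ∈ H := by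
  have he := not_isConsistent_unbalancingEdge hc
  have hC := isCycleSteps_fundCycle (not_mem_forest_of_not_isConsistent he)
  simpa [Walk.edgeSum_eq] using
    hf _ _ (hC.isUnbalancedCycle (stepsSign_fundCycle_of_not_isConsistent he))

variable (Γ) in
def forestParams (H : AddSubgroup G) (f : E → G)
    (hf : ∀ (v : V) (W : Γ.Walk v v), Γ.IsUnbalancedCycle W → W.edgeSum f ∈ H) :
    Γ.Params H :=
  (fun v => f (Γ.parentStep v.1 v.2).1,
    fun c => ⟨_, sum_fundCycle_unbalancingEdge_mem hf c.2⟩)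

lemma IsTension.eq_of_forestParams_eq {H : AddSubgroup G} {f f' : E → G}
    (hf : Γ.IsTension ω f) (hf' : Γ.IsTension ω f')
    (hfH : ∀ (v : V) (W : Γ.Walk v v), Γ.IsUnbalancedCycle W → W.edgeSum f ∈ H)
    (hf'H : ∀ (v : V) (W : Γ.Walk v v), Γ.IsUnbalancedCycle W → W.edgeSum f' ∈ H)
    (h : Γ.forestParams H f hfH = Γ.forestParams H f' hf'H) : f = f' := by
  simp only [forestParams, Prod.ext_iff, funext_iff, Subtype.ext_iff] at h
  have hF : ∀ g ∈ Γ.forest, (f - f') g = 0 := by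
    rintro g ⟨v, hv, rfl⟩
    exact sub_eq_zero.mpr (h.1 ⟨v, hv⟩)
  refine funext fun e => sub_eq_zero.mp ((hf.sub hf').eq_zero_of_forest hF
    (fun c hc => sub_eq_zero.mpr ?_) e)
  have hc := h.2 ⟨c, hc⟩
  rw [sum_fundCycle, sum_fundCycle] at hc
  refine add_right_cancel (hc.trans (congrArg _ (congrArg _ (List.map_congr_left ?_))))
  intro s hs
  exact (sub_eq_zero.mp (hF s.1 (forestPath_subset_forest _ _ s.1
    (List.mem_map_of_mem hs)))).symm

end Params

section Counting

variable [Finite V]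

instance : Finite Γ.Components := Finite.of_surjective Γ.comp fun c => ⟨Γ.rep c, comp_rep c⟩

lemma card_not_root : Nat.card {v : V // v ≠ Γ.root v} = Nat.card V - Γ.kAll := by
  change Nat.card {v : V // ¬ v = Γ.root v} = _
  rw [kAll, ← Nat.card_congr (rootsEquivComponents Γ),
    ← card_subtype_add_card_subtype_not fun v => v = Γ.root v]
  omega

lemma kb_add_ku : Γ.kb + Γ.ku = Γ.kAll :=
  card_subtype_add_card_subtype_not _

lemma kAll_le_card : Γ.kAll ≤ Nat.card V :=
  Nat.card_le_card_of_surjective Γ.comp fun c => ⟨Γ.rep c, comp_rep c⟩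

lemma card_params {G : Type*} [AddCommGroup G] (H : AddSubgroup G) :
    Nat.card (Γ.Params H) = Nat.card G ^ (Nat.card V - Γ.kAll) * Nat.card H ^ Γ.ku := by
  rw [Nat.card_prod, Nat.card_fun, Nat.card_fun, card_not_root, ku]

variable {G : Type*} [AddCommGroup G] [Finite G] {ω : E → Bool → ℤˣ}

theorem card_tensions_edgeSum_mem (hω : Γ.IsCompatible ω) (H : AddSubgroup G)
    (hH : twoG G ≤ H) :
    Nat.card {f : E → G // Γ.IsTension ω f ∧
      ∀ (v : V) (W : Γ.Walk v v), Γ.IsUnbalancedCycle W → W.edgeSum f ∈ H} =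
      Nat.card G ^ (Nat.card V - Γ.kAll) * Nat.card H ^ Γ.ku := by
  have hinj : Function.Injective fun f : {f : E → G // Γ.IsTension ω f ∧
      ∀ (v : V) (W : Γ.Walk v v), Γ.IsUnbalancedCycle W → W.edgeSum f ∈ H} =>
      Γ.forestParams H f.1 f.2.2 :=
    fun f f' h => Subtype.ext (f.2.1.eq_of_forestParams_eq f'.2.1 _ _ h)
  have := Finite.of_injective _ hinj
  rw [← card_params]
  refine le_antisymm (Nat.card_le_card_of_injective _ hinj)
    (Nat.card_le_card_of_injective (fun x => ⟨Γ.tensionOf ω (Γ.paramPotential x) (Γ.paramKappa x),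
      isTension_tensionOf hω, fun v W hW => edgeSum_tensionOf_mem hω hH (paramKappa_mem x) hW⟩)
      fun x y h => tensionOf_params_injective hω H (congrArg Subtype.val h))

end Counting

end SGraph

end

theorem card_tensions_and_potentialDifferences_general (V E : Type) [Finite V]
    (Γ : SGraph V E) (ω : E → Bool → ℤˣ) (hω : Γ.IsCompatible ω)
    (G : Type) [AddCommGroup G] [Finite G] :
    Nat.card {f : E → G // Γ.IsTension ω f} =
      Nat.card G ^ (Nat.card V - Γ.kb) ∧
    Nat.card {f : E → G // Γ.IsPotentialDifference ω f} =
      Nat.card G ^ (Nat.card V - Γ.kAll) * Nat.card (twoG G) ^ Γ.ku := by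
  refine ⟨?_, Γ.card_tensions_edgeSum_mem hω (twoG G) le_rfl⟩
  have h := Γ.card_tensions_edgeSum_mem hω (⊤ : AddSubgroup G) le_top
  rw [AddSubgroup.card_top, ← pow_add] at h
  have e : {f : E → G // Γ.IsTension ω f} ≃ {f : E → G // Γ.IsTension ω f ∧
      ∀ (v : V) (W : Γ.Walk v v), Γ.IsUnbalancedCycle W → W.edgeSum f ∈ (⊤ : AddSubgroup G)} :=
    Equiv.subtypeEquivRight fun f => (and_iff_left_of_imp fun _ _ _ _ => AddSubgroup.mem_top _).symm
  rw [Nat.card_congr e, h]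
  have := Γ.kb_add_ku
  have := Γ.kAll_le_card
  congr 1
  omega

/-- Theorem 7.7: the number of `G`-tensions of a signed graph is
`|G|^{|V|−k_b(Σ)}`, and the number of `G`-potential differences is
`|G|^{|V|−k(Σ)}·|2G|^{k_u(Σ)}`. -/
theorem card_tensions_and_potentialDifferences (V E : Type) [Finite V] [Finite E]
    (Γ : SGraph V E) (ω : E → Bool → ℤˣ) (hω : Γ.IsCompatible ω)
    (G : Type) [AddCommGroup G] [Finite G] :
    Nat.card {f : E → G // Γ.IsTension ω f} =
      Nat.card G ^ (Nat.card V - Γ.kb) ∧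
    Nat.card {f : E → G // Γ.IsPotentialDifference ω f} =
      Nat.card G ^ (Nat.card V - Γ.kAll) * Nat.card (twoG G) ^ Γ.ku :=
  card_tensions_and_potentialDifferences_general V E Γ ω hω G
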